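/- arXiv:2303.13759 — 9 statements merged into one kernel-verified Lean document; each statement's English description precedes it below -/
import Mathlib

section
/- For every integer n ≥ 13, there exist two distinct primes p and q with 2 ≤ p, q ≤ ⌊n/2⌋ such that neither p nor q divides n. -/
set_option maxHeartbeats 4000000

lemma two_big_primes_not_both_dvd {p q n : ℕ} (hp : p.Prime) (hq : q.Prime)
    (hne : p ≠ q) (h : n < p * q) (hn : 0 < n) (hpn : p ∣ n) (hqn : q ∣ n) : False := by
  have hco : Nat.Coprime p q := (Nat.coprime_primes hp hq).mpr hne
  have := Nat.le_of_dvd hn (hco.mul_dvd_of_dvd_of_dvd hpn hqn)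
  omega

/-- For every integer `n ≥ 13`, there exist two distinct primes `p, q` with
`2 ≤ p, q ≤ ⌊n/2⌋` such that neither `p` nor `q` divides `n`. -/
theorem stmt_1 (n : ℕ) (hn : 13 ≤ n) :
    ∃ p q : ℕ, p.Prime ∧ q.Prime ∧ p ≠ q ∧ 2 ≤ p ∧ p ≤ n / 2 ∧ 2 ≤ q ∧ q ≤ n / 2 ∧
      ¬ p ∣ n ∧ ¬ q ∣ n := by
  rcases lt_or_ge n 2310 with hsmall | hbig
  · by_cases h2 : (2:ℕ) ∣ n
    · have hd : (2:ℕ) ∣ n := h2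
      by_cases h3 : (3:ℕ) ∣ n
      · have hd : (6:ℕ) ∣ n := Nat.Coprime.mul_dvd_of_dvd_of_dvd (by decide) hd h3
        by_cases h5 : (5:ℕ) ∣ n
        · have hd : (30:ℕ) ∣ n := Nat.Coprime.mul_dvd_of_dvd_of_dvd (by decide) hd h5
          by_cases h7 : (7:ℕ) ∣ n
          · have hd : (210:ℕ) ∣ n := Nat.Coprime.mul_dvd_of_dvd_of_dvd (by decide) hd h7
            by_cases h11 : (11:ℕ) ∣ n
            · have hd : (2310:ℕ) ∣ n := Nat.Coprime.mul_dvd_of_dvd_of_dvd (by decide) hd h11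
              by_cases h13 : (13:ℕ) ∣ n
              · have hd : (30030:ℕ) ∣ n := Nat.Coprime.mul_dvd_of_dvd_of_dvd (by decide) hd h13
                exact absurd hd (by clear * - hn hsmall; omega)
              ·
                exact absurd hd (by clear * - hn hsmall; omega)
            ·
              by_cases h13 : (13:ℕ) ∣ n
              · have hd : (2730:ℕ) ∣ n := Nat.Coprime.mul_dvd_of_dvd_of_dvd (by decide) hd h13
                exact absurd hd (by clear * - hn hsmall; omega)
              ·
                refine ⟨11, 13, by norm_num, by norm_num, by norm_num, by norm_num, by clear * - hd hn; omega, by norm_num, by clear * - hd hn; omega, h11, h13⟩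
          ·
            by_cases h11 : (11:ℕ) ∣ n
            · have hd : (330:ℕ) ∣ n := Nat.Coprime.mul_dvd_of_dvd_of_dvd (by decide) hd h11
              by_cases h13 : (13:ℕ) ∣ n
              · have hd : (4290:ℕ) ∣ n := Nat.Coprime.mul_dvd_of_dvd_of_dvd (by decide) hd h13
                exact absurd hd (by clear * - hn hsmall; omega)
              ·
                refine ⟨7, 13, by norm_num, by norm_num, by norm_num, by norm_num, by clear * - hd hn; omega, by norm_num, by clear * - hd hn; omega, h7, h13⟩
            ·
              refine ⟨7, 11, by norm_num, by norm_num, by norm_num, by norm_num, by clear * - hd hn; omega, by norm_num, by clear * - hd hn; omega, h7, h11⟩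
        ·
          by_cases h7 : (7:ℕ) ∣ n
          · have hd : (42:ℕ) ∣ n := Nat.Coprime.mul_dvd_of_dvd_of_dvd (by decide) hd h7
            by_cases h11 : (11:ℕ) ∣ n
            · have hd : (462:ℕ) ∣ n := Nat.Coprime.mul_dvd_of_dvd_of_dvd (by decide) hd h11
              by_cases h13 : (13:ℕ) ∣ n
              · have hd : (6006:ℕ) ∣ n := Nat.Coprime.mul_dvd_of_dvd_of_dvd (by decide) hd h13
                exact absurd hd (by clear * - hn hsmall; omega)
              ·
                refine ⟨5, 13, by norm_num, by norm_num, by norm_num, by norm_num, by clear * - hd hn; omega, by norm_num, by clear * - hd hn; omega, h5, h13⟩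
            ·
              refine ⟨5, 11, by norm_num, by norm_num, by norm_num, by norm_num, by clear * - hd hn; omega, by norm_num, by clear * - hd hn; omega, h5, h11⟩
          ·
            refine ⟨5, 7, by norm_num, by norm_num, by norm_num, by norm_num, by clear * - hd hn; omega, by norm_num, by clear * - hd hn; omega, h5, h7⟩
      ·
        by_cases h5 : (5:ℕ) ∣ n
        · have hd : (10:ℕ) ∣ n := Nat.Coprime.mul_dvd_of_dvd_of_dvd (by decide) hd h5
          by_cases h7 : (7:ℕ) ∣ n
          · have hd : (70:ℕ) ∣ n := Nat.Coprime.mul_dvd_of_dvd_of_dvd (by decide) hd h7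
            by_cases h11 : (11:ℕ) ∣ n
            · have hd : (770:ℕ) ∣ n := Nat.Coprime.mul_dvd_of_dvd_of_dvd (by decide) hd h11
              by_cases h13 : (13:ℕ) ∣ n
              · have hd : (10010:ℕ) ∣ n := Nat.Coprime.mul_dvd_of_dvd_of_dvd (by decide) hd h13
                exact absurd hd (by clear * - hn hsmall; omega)
              ·
                refine ⟨3, 13, by norm_num, by norm_num, by norm_num, by norm_num, by clear * - hd hn; omega, by norm_num, by clear * - hd hn; omega, h3, h13⟩
            ·
              refine ⟨3, 11, by norm_num, by norm_num, by norm_num, by norm_num, by clear * - hd hn; omega, by norm_num, by clear * - hd hn; omega, h3, h11⟩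
          ·
            refine ⟨3, 7, by norm_num, by norm_num, by norm_num, by norm_num, by clear * - hd hn; omega, by norm_num, by clear * - hd hn; omega, h3, h7⟩
        ·
          refine ⟨3, 5, by norm_num, by norm_num, by norm_num, by norm_num, by clear * - hd hn; omega, by norm_num, by clear * - hd hn; omega, h3, h5⟩
    ·
      by_cases h3 : (3:ℕ) ∣ n
      · have hd : (3:ℕ) ∣ n := h3
        by_cases h5 : (5:ℕ) ∣ n
        · have hd : (15:ℕ) ∣ n := Nat.Coprime.mul_dvd_of_dvd_of_dvd (by decide) hd h5
          by_cases h7 : (7:ℕ) ∣ n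
          · have hd : (105:ℕ) ∣ n := Nat.Coprime.mul_dvd_of_dvd_of_dvd (by decide) hd h7
            by_cases h11 : (11:ℕ) ∣ n
            · have hd : (1155:ℕ) ∣ n := Nat.Coprime.mul_dvd_of_dvd_of_dvd (by decide) hd h11
              by_cases h13 : (13:ℕ) ∣ n
              · have hd : (15015:ℕ) ∣ n := Nat.Coprime.mul_dvd_of_dvd_of_dvd (by decide) hd h13
                exact absurd hd (by clear * - hn hsmall; omega)
              ·
                refine ⟨2, 13, by norm_num, by norm_num, by norm_num, by norm_num, by clear * - hd hn; omega, by norm_num, by clear * - hd hn; omega, h2, h13⟩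
            ·
              refine ⟨2, 11, by norm_num, by norm_num, by norm_num, by norm_num, by clear * - hd hn; omega, by norm_num, by clear * - hd hn; omega, h2, h11⟩
          ·
            refine ⟨2, 7, by norm_num, by norm_num, by norm_num, by norm_num, by clear * - hd hn; omega, by norm_num, by clear * - hd hn; omega, h2, h7⟩
        ·
          refine ⟨2, 5, by norm_num, by norm_num, by norm_num, by norm_num, by clear * - hd hn; omega, by norm_num, by clear * - hd hn; omega, h2, h5⟩
      ·
        refine ⟨2, 3, by norm_num, by norm_num, by norm_num, by norm_num, by clear * - hn; omega, by norm_num, by clear * - hn; omega, h2, h3⟩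
  · -- n ≥ 2310 : Bertrand three times
    obtain ⟨p₁, hp₁, hp₁l, hp₁u⟩ := Nat.exists_prime_lt_and_le_two_mul (n / 4) (by omega)
    obtain ⟨p₂, hp₂, hp₂l, hp₂u⟩ := Nat.exists_prime_lt_and_le_two_mul (n / 8) (by omega)
    obtain ⟨p₃, hp₃, hp₃l, hp₃u⟩ := Nat.exists_prime_lt_and_le_two_mul (n / 16) (by omega)
    have hn0 : 0 < n := by omega
    have h12 : p₁ ≠ p₂ := by omega
    have h13' : p₁ ≠ p₃ := by omega
    have h23 : p₂ ≠ p₃ := by omega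
    have hb1 : p₁ ≤ n / 2 := by omega
    have hb2 : p₂ ≤ n / 2 := by omega
    have hb3 : p₃ ≤ n / 2 := by omega
    have hs1 : 2 ≤ p₁ := hp₁.two_le
    have hs2 : 2 ≤ p₂ := hp₂.two_le
    have hs3 : 2 ≤ p₃ := hp₃.two_le
    -- each pᵢ² > n
    have key : ∀ i j : ℕ, n / 16 < i → n / 16 < j → n < i * j := by
      intro i j hi hj
      have h16 : 16 * (n / 16) + 15 ≥ n := by omega
      have hi' : n / 16 + 1 ≤ i := hi
      have hj' : n / 16 + 1 ≤ j := hj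
      have hm : 144 ≤ n / 16 := by omega
      nlinarith [Nat.mul_le_mul hi' hj']
    have k12 : n < p₁ * p₂ := key _ _ (by omega) (by omega)
    have k13 : n < p₁ * p₃ := key _ _ (by omega) (by omega)
    have k23 : n < p₂ * p₃ := key _ _ (by omega) (by omega)
    by_cases d1 : p₁ ∣ n
    · refine ⟨p₂, p₃, hp₂, hp₃, h23, hs2, hb2, hs3, hb3, ?_, ?_⟩
      · intro d2; exact two_big_primes_not_both_dvd hp₁ hp₂ h12 k12 hn0 d1 d2
      · intro d3; exact two_big_primes_not_both_dvd hp₁ hp₃ h13' k13 hn0 d1 d3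
    · by_cases d2 : p₂ ∣ n
      · refine ⟨p₁, p₃, hp₁, hp₃, h13', hs1, hb1, hs3, hb3, d1, ?_⟩
        intro d3; exact two_big_primes_not_both_dvd hp₂ hp₃ h23 k23 hn0 d2 d3
      · exact ⟨p₁, p₂, hp₁, hp₂, h12, hs1, hb1, hs2, hb2, d1, d2⟩
end

section
/- If n = k·ℓ + 1 or n = k·ℓ − 1 for positive integers k, ℓ, then the circulant graph C_n(1, k) is isomorphic to C_n(1, ℓ). -/
/-!
If `k * ℓ = ±1` in `ZMod n`, then `ℓ` is a unit, and multiplication by `ℓ` is a group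
automorphism of `ZMod n` carrying the jump set `{1, k}` to `{ℓ, ±1}`. Since jumps only matter
up to sign, the image is again the circulant graph with jumps `{1, ℓ}`. The hypothesis
`n = k ℓ ± 1` says exactly that `k * ℓ = ∓1` in `ZMod n`.
-/

open SimpleGraph

namespace SimpleGraph

variable {G H : Type*} [AddGroup G] [AddGroup H]

def Iso.circulantGraphOfAddEquiv (φ : G ≃+ H) (s : Set G) :
    circulantGraph s ≃g circulantGraph (φ '' s) where
  toEquiv := φ.toEquiv
  map_rel_iff' {x y} := by
    simp only [circulantGraph_adj, AddEquiv.toEquiv_eq_coe, EquivLike.coe_coe, ← map_sub,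
      φ.injective.mem_set_image, φ.injective.ne_iff]

theorem circulantGraph_insert_neg (a : G) (s : Set G) :
    circulantGraph (insert (-a) s) = circulantGraph (insert a s) := by
  ext x y
  simp only [circulantGraph_adj, Set.mem_insert_iff, neg_sub, ← neg_eq_iff_eq_neg]
  tauto

end SimpleGraph

theorem circulantGraph_one_iso_of_mul_eq_one_or_neg_one {R : Type*} [CommRing R] {k ℓ : R}
    (hkℓ : k * ℓ = 1 ∨ k * ℓ = -1) :
    Nonempty (circulantGraph ({1, k} : Set R) ≃g circulantGraph ({1, ℓ} : Set R)) := by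
  have hℓ : IsUnit ℓ := by
    refine isUnit_of_mul_isUnit_right (x := k) ?_
    rcases hkℓ with h | h <;> simp [h]
  obtain ⟨u, rfl⟩ := hℓ
  have himage : DistribMulAction.toAddEquiv R u '' {1, k} = {k * u, (u : R)} := by
    simp [Set.image_insert_eq, Units.smul_def, mul_comm, Set.pair_comm]
  have hjumps : circulantGraph ({k * u, (u : R)} : Set R) = circulantGraph {1, (u : R)} := by
    rcases hkℓ with h | h
    · rw [h]
    · rw [h, circulantGraph_insert_neg]
  rw [← hjumps, ← himage]
  exact ⟨Iso.circulantGraphOfAddEquiv _ _⟩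

theorem stmt_3_general (n k ℓ : ℕ)
    (h : n = k * ℓ + 1 ∨ n + 1 = k * ℓ) :
    Nonempty (circulantGraph ({1, (k : ZMod n)} : Set (ZMod n)) ≃g
      circulantGraph ({1, (ℓ : ZMod n)} : Set (ZMod n))) := by
  apply circulantGraph_one_iso_of_mul_eq_one_or_neg_one
  rcases h with h | h
  · have hcast := congrArg (Nat.cast : ℕ → ZMod n) h
    push_cast [ZMod.natCast_self] at hcast
    exact Or.inr (by linear_combination -hcast)
  · have hcast := congrArg (Nat.cast : ℕ → ZMod n) h
    push_cast [ZMod.natCast_self] at hcast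
    exact Or.inl (by linear_combination -hcast)

/-- If `n = k·ℓ + 1` or `n = k·ℓ − 1` for positive integers `k, ℓ`, then
`C_n(1, k) ≅ C_n(1, ℓ)`. -/
theorem stmt_3 (n k ℓ : ℕ) (hk : 0 < k) (hℓ : 0 < ℓ)
    (h : n = k * ℓ + 1 ∨ n + 1 = k * ℓ) :
    Nonempty (circulantGraph ({1, (k : ZMod n)} : Set (ZMod n)) ≃g
      circulantGraph ({1, (ℓ : ZMod n)} : Set (ZMod n))) :=
  stmt_3_general n k ℓ h
end

section
/- For every even integer n ≥ 8, the Möbius ladder C_n(1, n/2) admits a proper 3-coloring whose only color-preserving graph automorphism is the identity; that is, its distinguishing chromatic number is 3. -/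
open SimpleGraph

/-- A coloring is proper if adjacent vertices receive different colors. -/
def IsProperColoring {V α : Type*} (G : SimpleGraph V) (c : V → α) : Prop :=
  ∀ x y, G.Adj x y → c x ≠ c y

/-- A coloring is distinguishing if the only color-preserving automorphism is the identity. -/
def IsDistinguishing {V α : Type*} (G : SimpleGraph V) (c : V → α) : Prop :=
  ∀ φ : G ≃g G, (∀ v, c (φ v) = c v) → ∀ v, φ v = v

/-- The Möbius ladder circulant graph. -/
abbrev MG (n : ℕ) : SimpleGraph (ZMod n) :=
  circulantGraph ({1, ((n / 2 : ℕ) : ZMod n)} : Set (ZMod n))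

/-- natural number cast into `ZMod n` -/
def Nc (n : ℕ) (k : ℕ) : ZMod n := (k : ZMod n)

namespace MA

lemma cast_injn {n a b : ℕ} (ha : a < n) (hb : b < n) (h : (a : ZMod n) = b) : a = b := by
  haveI : NeZero n := ⟨by omega⟩
  have := congrArg ZMod.val h
  rwa [ZMod.val_cast_of_lt ha, ZMod.val_cast_of_lt hb] at this

lemma cast_nen {n a b : ℕ} (ha : a < n) (hb : b < n) (hab : a ≠ b) :
    (a : ZMod n) ≠ (b : ZMod n) := fun h => hab (cast_injn ha hb h)

lemma adj_iff {n : ℕ} (hn : 8 ≤ n) (hev : 2 * (n/2) = n) (a b : ZMod n) :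
    (MG n).Adj a b ↔
      (b = a + 1 ∨ b = a - 1 ∨ b = a + ((n/2 : ℕ) : ZMod n)) := by
  haveI : NeZero n := ⟨by omega⟩
  set M : ZMod n := ((n/2 : ℕ) : ZMod n) with hM
  have hMM : M + M = 0 := by
    rw [hM, ← Nat.cast_add]
    have : n/2 + n/2 = n := by omega
    rw [this, ZMod.natCast_self]
  have h10 : (1 : ZMod n) ≠ 0 := by
    have := cast_nen (n := n) (a := 1) (b := 0) (by omega) (by omega) (by omega)
    simpa using this
  have hM0 : M ≠ 0 := by
    have := cast_nen (n := n) (a := n/2) (b := 0) (by omega) (by omega) (by omega)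
    simpa using this
  rw [circulantGraph_adj]
  simp only [Set.mem_insert_iff, Set.mem_singleton_iff]
  constructor
  · rintro ⟨hne, (h | h) | (h | h)⟩
    · right; left; linear_combination -h
    · right; right; linear_combination -h - hMM
    · left; linear_combination h
    · right; right; linear_combination h
  · rintro (h | h | h)
    · refine ⟨fun hh => h10 (by rw [hh] at h; linear_combination -h), ?_⟩
      right; left; linear_combination h
    · refine ⟨fun hh => h10 (by rw [hh] at h; linear_combination h), ?_⟩
      left; left; linear_combination -h
    · refine ⟨fun hh => hM0 (by rw [hh] at h; linear_combination -h), ?_⟩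
      right; right; linear_combination h

lemma bootstrap {n m : ℕ} (hm : n = 2 * m) (hm6 : 6 ≤ m)
    (c : ZMod n → Fin 3)
    (h0 : c (Nc n 0) = 2) (h2 : c (Nc n 2) = 2)
    (h1 : c (Nc n 1) = 1) (h3 : c (Nc n 3) = 1)
    (hcm : c (Nc n m) = 1)
    (hasym : ¬(c (Nc n 3) = c (Nc n (n-1)) ∧ c (Nc n 5) = c (Nc n (n-3))))
    (hF2 : ∀ x : ZMod n, c x = 2 → x = Nc n 0 ∨ x = Nc n 2 ∨
      ∃ y z, y ≠ z ∧ (MG n).Adj x y ∧ (MG n).Adj x z ∧ c y = 0 ∧ c z = 0) :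
    IsDistinguishing (MG n) c := by
  have hn : 12 ≤ n := by omega
  haveI : NeZero n := ⟨by omega⟩
  have hdv : ((n / 2 : ℕ) : ZMod n) = Nc n m := by
    have : n / 2 = m := by omega
    rw [this]; rfl
  have adj : ∀ a b : ZMod n, (MG n).Adj a b ↔
      (b = a + 1 ∨ b = a - 1 ∨ b = a + Nc n m) := by
    intro a b
    rw [adj_iff (by omega) (by omega), hdv]
  -- cast equalities
  have A1 : ∀ j : ℕ, Nc n (j+1) = Nc n j + 1 := by
    intro j; simp only [Nc]; push_cast; ring
  have S1 : ∀ j : ℕ, Nc n j = Nc n (j+1) - 1 := by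
    intro j; rw [A1]; ring
  have W : ∀ j : ℕ, Nc n (j + n) = Nc n j := by
    intro j; simp only [Nc]; push_cast [ZMod.natCast_self]; ring
  have AM : ∀ j : ℕ, Nc n (m + j) = Nc n j + Nc n m := by
    intro j; simp only [Nc]; push_cast; ring
  have NneH : ∀ a b : ℕ, a < n → b < n → a ≠ b → Nc n a ≠ Nc n b := by
    intro a b ha hb hab; exact cast_nen ha hb hab
  -- adjacency facts
  have adjS : ∀ j : ℕ, (MG n).Adj (Nc n j) (Nc n (j+1)) := by
    intro j; rw [adj]; left; rw [A1]
  have adjC : ∀ j : ℕ, (MG n).Adj (Nc n j) (Nc n (m+j)) := by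
    intro j; rw [adj]; right; right; rw [AM]
  -- neighbour structure lemmas
  have nbr_gen : ∀ (a : ZMod n) (s p q : ℕ),
      Nc n s = a + 1 → Nc n p = a - 1 → Nc n q = a + Nc n m →
      ∀ y, (MG n).Adj a y → (y = Nc n s ∨ y = Nc n p ∨ y = Nc n q) := by
    intro a s p q hs hp hq y hy
    rcases (adj a y).1 hy with h|h|h
    · left; rw [h, hs]
    · right; left; rw [h, hp]
    · right; right; rw [h, hq]
  have W0 : Nc n n = Nc n 0 := by
    have := W 0
    rwa [show 0 + n = n by omega] at this
  have e_n1 : Nc n (n-1) = Nc n 0 - 1 := by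
    have h := S1 (n-1)
    have e : n - 1 + 1 = n := by omega
    rw [e] at h
    rw [h, W0]
  have e_wrapm : ∀ j : ℕ, Nc n j = Nc n (m + j) + Nc n m := by
    intro j
    have : Nc n (m + (m + j)) = Nc n (m+j) + Nc n m := AM (m+j)
    have e : m + (m + j) = j + n := by omega
    rw [e, W j] at this
    exact this
  have nbr0 : ∀ y, (MG n).Adj (Nc n 0) y → (y = Nc n 1 ∨ y = Nc n (n-1) ∨ y = Nc n m) := by
    refine nbr_gen _ 1 (n-1) m (by rw [A1 0]) e_n1 ?_
    simp only [Nc]; push_cast; ring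
  have nbrK : ∀ k : ℕ, ∀ y, (MG n).Adj (Nc n (k+1)) y →
      (y = Nc n (k+2) ∨ y = Nc n k ∨ y = Nc n (m+(k+1))) :=
    fun k => nbr_gen _ (k+2) k (m+(k+1)) (by rw [A1 (k+1)]) (S1 k) (AM (k+1))
  have nbrM : ∀ y, (MG n).Adj (Nc n m) y → (y = Nc n (m+1) ∨ y = Nc n (m-1) ∨ y = Nc n 0) := by
    refine nbr_gen _ (m+1) (m-1) 0 ?_ ?_ ?_
    · exact A1 m
    · have := S1 (m-1)
      have e : m - 1 + 1 = m := by omega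
      rw [e] at this
      exact this
    · have := AM m
      have e : m + m = 0 + n := by omega
      rw [e, W 0] at this
      exact this
  have nbrKM : ∀ k : ℕ, ∀ y, (MG n).Adj (Nc n (m+(k+1))) y →
      (y = Nc n (m+(k+2)) ∨ y = Nc n (m+k) ∨ y = Nc n (k+1)) := by
    intro k
    refine nbr_gen _ (m+(k+2)) (m+k) (k+1) ?_ ?_ (e_wrapm (k+1))
    · have := A1 (m+(k+1))
      have e : m + (k+1) + 1 = m + (k+2) := by omega
      rw [e] at this
      exact this
    · have := S1 (m+k)
      have e : m + k + 1 = m + (k+1) := by omega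
      rw [e] at this
      exact this
  have nbrE1 : ∀ y, (MG n).Adj (Nc n (n-1)) y →
      (y = Nc n 0 ∨ y = Nc n (n-2) ∨ y = Nc n (m-1)) := by
    refine nbr_gen _ 0 (n-2) (m-1) ?_ ?_ ?_
    · have := A1 (n-1)
      have e : n - 1 + 1 = 0 + n := by omega
      rw [e, W 0] at this
      exact this
    · have := S1 (n-2)
      have e : n - 2 + 1 = n - 1 := by omega
      rw [e] at this
      exact this
    · have := e_wrapm (m-1)
      have e : m + (m - 1) = n - 1 := by omega
      rw [e] at this
      exact this
  have nbrE2 : ∀ y, (MG n).Adj (Nc n (n-2)) y →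
      (y = Nc n (n-1) ∨ y = Nc n (n-3) ∨ y = Nc n (m-2)) := by
    refine nbr_gen _ (n-1) (n-3) (m-2) ?_ ?_ ?_
    · have := A1 (n-2)
      have e : n - 2 + 1 = n - 1 := by omega
      rw [e] at this
      exact this
    · have := S1 (n-3)
      have e : n - 3 + 1 = n - 2 := by omega
      rw [e] at this
      exact this
    · have := e_wrapm (m-2)
      have e : m + (m - 2) = n - 2 := by omega
      rw [e] at this
      exact this
  have nbrF : ∀ y, (MG n).Adj (Nc n (m-1)) y →
      (y = Nc n m ∨ y = Nc n (m-2) ∨ y = Nc n (n-1)) := by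
    refine nbr_gen _ m (m-2) (n-1) ?_ ?_ ?_
    · have := A1 (m-1)
      have e : m - 1 + 1 = m := by omega
      rw [e] at this
      exact this
    · have := S1 (m-2)
      have e : m - 2 + 1 = m - 1 := by omega
      rw [e] at this
      exact this
    · have := AM (m-1)
      have e : m + (m - 1) = n - 1 := by omega
      rw [e] at this
      exact this
  intro φ hφ
  have amap : ∀ x y : ZMod n, (MG n).Adj x y → (MG n).Adj (φ x) (φ y) :=
    fun x y h => φ.map_rel_iff.mpr h
  have inj : Function.Injective φ := φ.injective
  -- the predicate P and transport
  have Ptrans : ∀ x : ZMod n,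
      (c x = 2 ∧ ∀ y z, (MG n).Adj x y → (MG n).Adj x z → c y = 0 → c z = 0 → y = z) →
      (c (φ x) = 2 ∧ ∀ y z, (MG n).Adj (φ x) y → (MG n).Adj (φ x) z → c y = 0 → c z = 0 → y = z) := by
    rintro x ⟨h2x, hu⟩
    refine ⟨by rw [hφ x]; exact h2x, ?_⟩
    intro y z hy hz hcy hcz
    obtain ⟨y', rfl⟩ := φ.surjective y
    obtain ⟨z', rfl⟩ := φ.surjective z
    have := hu y' z' (φ.map_rel_iff.mp hy) (φ.map_rel_iff.mp hz)
      (by rw [← hφ y']; exact hcy) (by rw [← hφ z']; exact hcz)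
    rw [this]
  have P0 : c (Nc n 0) = 2 ∧ ∀ y z, (MG n).Adj (Nc n 0) y → (MG n).Adj (Nc n 0) z →
      c y = 0 → c z = 0 → y = z := by
    refine ⟨h0, ?_⟩
    intro y z hy hz hcy hcz
    rcases nbr0 y hy with rfl|rfl|rfl
    · rw [h1] at hcy; exact absurd hcy (by decide)
    · rcases nbr0 z hz with rfl|rfl|rfl
      · rw [h1] at hcz; exact absurd hcz (by decide)
      · rfl
      · rw [hcm] at hcz; exact absurd hcz (by decide)
    · rw [hcm] at hcy; exact absurd hcy (by decide)
  have P2 : c (Nc n 2) = 2 ∧ ∀ y z, (MG n).Adj (Nc n 2) y → (MG n).Adj (Nc n 2) z →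
      c y = 0 → c z = 0 → y = z := by
    refine ⟨h2, ?_⟩
    have nbr2 := nbrK 1
    intro y z hy hz hcy hcz
    rcases nbr2 y hy with rfl|rfl|rfl
    · rw [h3] at hcy; exact absurd hcy (by decide)
    · rw [h1] at hcy; exact absurd hcy (by decide)
    · rcases nbr2 z hz with rfl|rfl|rfl
      · rw [h3] at hcz; exact absurd hcz (by decide)
      · rw [h1] at hcz; exact absurd hcz (by decide)
      · rfl
  have memP : ∀ x : ZMod n,
      (c x = 2 ∧ ∀ y z, (MG n).Adj x y → (MG n).Adj x z → c y = 0 → c z = 0 → y = z) →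
      (x = Nc n 0 ∨ x = Nc n 2) := by
    rintro x ⟨hcx, hu⟩
    rcases hF2 x hcx with h|h|⟨y, z, hyz, hy, hz, cy, cz⟩
    · exact Or.inl h
    · exact Or.inr h
    · exact absurd (hu y z hy hz cy cz) hyz
  have h00 := memP _ (Ptrans _ P0)
  have h22 := memP _ (Ptrans _ P2)
  have hne02 : φ (Nc n 0) ≠ φ (Nc n 2) :=
    fun h => (NneH 0 2 (by omega) (by omega) (by omega)) (inj h)
  have hset : (φ (Nc n 0) = Nc n 0 ∧ φ (Nc n 2) = Nc n 2) ∨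
      (φ (Nc n 0) = Nc n 2 ∧ φ (Nc n 2) = Nc n 0) := by
    rcases h00 with h|h <;> rcases h22 with g|g
    · exact absurd (h.trans g.symm) hne02
    · exact Or.inl ⟨h, g⟩
    · exact Or.inr ⟨h, g⟩
    · exact absurd (h.trans g.symm) hne02
  -- common neighbour of 0 and 2 is 1
  have hc1 : ∀ x : ZMod n, (MG n).Adj (Nc n 0) x → (MG n).Adj (Nc n 2) x → x = Nc n 1 := by
    intro x hx0 hx2
    have nbr2 := nbrK 1
    rcases nbr0 x hx0 with rfl|h|h
    · rfl
    · rcases nbr2 x hx2 with g|g|g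
      · exact absurd (h.symm.trans g) (NneH _ _ (by omega) (by omega) (by omega))
      · exact absurd (h.symm.trans g) (NneH _ _ (by omega) (by omega) (by omega))
      · exact absurd (h.symm.trans g) (NneH _ _ (by omega) (by omega) (by omega))
    · rcases nbr2 x hx2 with g|g|g
      · exact absurd (h.symm.trans g) (NneH _ _ (by omega) (by omega) (by omega))
      · exact absurd (h.symm.trans g) (NneH _ _ (by omega) (by omega) (by omega))
      · exact absurd (h.symm.trans g) (NneH _ _ (by omega) (by omega) (by omega))
  rcases hset with ⟨e0, e2⟩ | ⟨e0, e2⟩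
  · -- main branch : φ fixes 0 and 2
    have p1 : φ (Nc n 1) = Nc n 1 := by
      have t1 := amap _ _ (adjS 0); rw [e0] at t1
      have t2 := amap _ _ (adjS 1); rw [e2] at t2
      exact hc1 _ t1 t2.symm
    have p1m : φ (Nc n (m+1)) = Nc n (m+1) := by
      have t := amap _ _ (adjC 1); rw [p1] at t
      rcases nbrK 0 _ t with h|h|h
      · exact absurd (inj (h.trans e2.symm)) (NneH _ _ (by omega) (by omega) (by omega))
      · exact absurd (inj (h.trans e0.symm)) (NneH _ _ (by omega) (by omega) (by omega))
      · exact h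
    have pm : φ (Nc n m) = Nc n m := by
      have hadj0m : (MG n).Adj (Nc n 0) (Nc n m) := by
        have := adjC 0
        rwa [show m + 0 = m by omega] at this
      have t := amap _ _ hadj0m; rw [e0] at t
      rcases nbr0 _ t with h|h|h
      · exact absurd (inj (h.trans p1.symm)) (NneH _ _ (by omega) (by omega) (by omega))
      · exfalso
        have t2 := amap _ _ (adjS m); rw [h, p1m] at t2
        rcases nbrE1 _ t2 with g|g|g
        · exact absurd g (NneH (m+1) 0 (by omega) (by omega) (by omega))
        · exact absurd g (NneH (m+1) (n-2) (by omega) (by omega) (by omega))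
        · exact absurd g (NneH (m+1) (m-1) (by omega) (by omega) (by omega))
      · exact h
    have pn1 : φ (Nc n (n-1)) = Nc n (n-1) := by
      have hadj : (MG n).Adj (Nc n 0) (Nc n (n-1)) := by
        rw [adj]; right; left; exact e_n1
      have t := amap _ _ hadj; rw [e0] at t
      rcases nbr0 _ t with h|h|h
      · exact absurd (inj (h.trans p1.symm)) (NneH _ _ (by omega) (by omega) (by omega))
      · exact h
      · exact absurd (inj (h.trans pm.symm)) (NneH _ _ (by omega) (by omega) (by omega))
    have p2m : φ (Nc n (m+2)) = Nc n (m+2) := by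
      have t := amap _ _ (adjC 2); rw [e2] at t
      rcases nbrK 1 _ t with h|h|h
      · exfalso
        have t2 := amap _ _ (adjS (m+1)); rw [p1m, h] at t2
        rcases nbrKM 0 _ t2 with g|g|g
        · exact absurd g (NneH 3 (m+2) (by omega) (by omega) (by omega))
        · exact absurd g (NneH 3 (m+0) (by omega) (by omega) (by omega))
        · exact absurd g (NneH 3 1 (by omega) (by omega) (by omega))
      · exact absurd (inj (h.trans p1.symm)) (NneH _ _ (by omega) (by omega) (by omega))
      · exact h
    have p3 : φ (Nc n 3) = Nc n 3 := by
      have t := amap _ _ (adjS 2); rw [e2] at t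
      rcases nbrK 1 _ t with h|h|h
      · exact h
      · exact absurd (inj (h.trans p1.symm)) (NneH _ _ (by omega) (by omega) (by omega))
      · exact absurd (inj (h.trans p2m.symm)) (NneH _ _ (by omega) (by omega) (by omega))
    have p3m : φ (Nc n (m+3)) = Nc n (m+3) := by
      have t := amap _ _ (adjS (m+2)); rw [p2m] at t
      rcases nbrKM 1 _ t with h|h|h
      · exact h
      · exact absurd (inj (h.trans p1m.symm)) (NneH _ _ (by omega) (by omega) (by omega))
      · exact absurd (inj (h.trans e2.symm)) (NneH _ _ (by omega) (by omega) (by omega))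
    have p4 : φ (Nc n 4) = Nc n 4 := by
      have t := amap _ _ (adjS 3); rw [p3] at t
      rcases nbrK 2 _ t with h|h|h
      · exact h
      · exact absurd (inj (h.trans e2.symm)) (NneH _ _ (by omega) (by omega) (by omega))
      · exact absurd (inj (h.trans p3m.symm)) (NneH _ _ (by omega) (by omega) (by omega))
    have p4m : φ (Nc n (m+4)) = Nc n (m+4) := by
      have t := amap _ _ (adjS (m+3)); rw [p3m] at t
      rcases nbrKM 2 _ t with h|h|h
      · exact h
      · exact absurd (inj (h.trans p2m.symm)) (NneH _ _ (by omega) (by omega) (by omega))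
      · exact absurd (inj (h.trans p3.symm)) (NneH _ _ (by omega) (by omega) (by omega))
    have main : ∀ k, 3 ≤ k → (φ (Nc n k) = Nc n k ∧ φ (Nc n (k+1)) = Nc n (k+1) ∧
        φ (Nc n (m+k)) = Nc n (m+k) ∧ φ (Nc n (m+(k+1))) = Nc n (m+(k+1))) := by
      intro k hk
      induction k, hk using Nat.le_induction with
      | base => exact ⟨p3, p4, p3m, p4m⟩
      | succ k hk ih =>
        obtain ⟨a, b, am, bm⟩ := ih
        refine ⟨b, ?_, bm, ?_⟩
        · have t := amap _ _ (adjS (k+1)); rw [b] at t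
          rcases nbrK k _ t with h|h|h
          · exact h
          · exfalso
            have h2 := inj (h.trans a.symm)
            simp only [Nc] at h2; push_cast at h2
            have h3 : ((2:ℕ) : ZMod n) = ((0:ℕ) : ZMod n) := by
              push_cast; linear_combination h2
            exact cast_nen (n:=n) (a:=2) (b:=0) (by omega) (by omega) (by omega) h3
          · exfalso
            have h2 := inj (h.trans bm.symm)
            simp only [Nc] at h2; push_cast at h2
            have h3 : ((1:ℕ) : ZMod n) = ((m:ℕ) : ZMod n) := by
              push_cast; linear_combination h2
            exact cast_nen (n:=n) (a:=1) (b:=m) (by omega) (by omega) (by omega) h3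
        · have t := amap _ _ (adjS (m+(k+1))); rw [bm] at t
          rcases nbrKM k _ t with h|h|h
          · exact h
          · exfalso
            have h2 := inj (h.trans am.symm)
            simp only [Nc] at h2; push_cast at h2
            have h3 : ((2:ℕ) : ZMod n) = ((0:ℕ) : ZMod n) := by
              push_cast; linear_combination h2
            exact cast_nen (n:=n) (a:=2) (b:=0) (by omega) (by omega) (by omega) h3
          · exfalso
            have h2 := inj (h.trans b.symm)
            simp only [Nc] at h2; push_cast at h2
            have h3 : ((m+1:ℕ) : ZMod n) = ((0:ℕ) : ZMod n) := by
              push_cast; linear_combination h2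
            exact cast_nen (n:=n) (a:=m+1) (b:=0) (by omega) (by omega) (by omega) h3
    intro v
    have hv : Nc n (ZMod.val v) = v := by
      simp only [Nc]; rw [ZMod.natCast_val, ZMod.cast_id]
    rcases lt_or_ge (ZMod.val v) 3 with hlt|hge
    · have hcases : ZMod.val v = 0 ∨ ZMod.val v = 1 ∨ ZMod.val v = 2 := by omega
      rcases hcases with e|e|e
      · rw [← hv, e]; exact e0
      · rw [← hv, e]; exact p1
      · rw [← hv, e]; exact e2
    · have h := (main _ hge).1
      rw [hv] at h
      exact h
  · -- swap branch : contradiction with hasym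
    exfalso
    have p1 : φ (Nc n 1) = Nc n 1 := by
      have t1 := amap _ _ (adjS 0); rw [e0] at t1
      have t2 := amap _ _ (adjS 1); rw [e2] at t2
      exact hc1 _ t2.symm t1
    have p1m : φ (Nc n (m+1)) = Nc n (m+1) := by
      have t := amap _ _ (adjC 1); rw [p1] at t
      rcases nbrK 0 _ t with h|h|h
      · exact absurd (inj (h.trans e0.symm)) (NneH _ _ (by omega) (by omega) (by omega))
      · exact absurd (inj (h.trans e2.symm)) (NneH _ _ (by omega) (by omega) (by omega))
      · exact h
    have qm : φ (Nc n m) = Nc n (m+2) := by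
      have hadj0m : (MG n).Adj (Nc n 0) (Nc n m) := by
        have := adjC 0
        rwa [show m + 0 = m by omega] at this
      have t := amap _ _ hadj0m; rw [e0] at t
      rcases nbrK 1 _ t with h|h|h
      · exfalso
        have t2 := amap _ _ (adjS m); rw [h, p1m] at t2
        rcases nbrK 2 _ t2 with g|g|g
        · exact absurd g (NneH (m+1) 4 (by omega) (by omega) (by omega))
        · exact absurd g (NneH (m+1) 2 (by omega) (by omega) (by omega))
        · exact absurd g (NneH (m+1) (m+3) (by omega) (by omega) (by omega))
      · exact absurd (inj (h.trans p1.symm)) (NneH _ _ (by omega) (by omega) (by omega))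
      · exact h
    have q2m : φ (Nc n (m+2)) = Nc n m := by
      have t := amap _ _ (adjS (m+1)); rw [p1m] at t
      rcases nbrKM 0 _ t with h|h|h
      · exact absurd (inj (h.trans qm.symm)) (NneH _ _ (by omega) (by omega) (by omega))
      · exact h
      · exact absurd (inj (h.trans p1.symm)) (NneH _ _ (by omega) (by omega) (by omega))
    have q3 : φ (Nc n 3) = Nc n (n-1) := by
      have t := amap _ _ (adjS 2); rw [e2] at t
      rcases nbr0 _ t with h|h|h
      · exact absurd (inj (h.trans p1.symm)) (NneH _ _ (by omega) (by omega) (by omega))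
      · exact h
      · exact absurd (inj (h.trans q2m.symm)) (NneH _ _ (by omega) (by omega) (by omega))
    have q3m : φ (Nc n (m+3)) = Nc n (m-1) := by
      have t := amap _ _ (adjS (m+2)); rw [q2m] at t
      rcases nbrM _ t with h|h|h
      · exact absurd (inj (h.trans p1m.symm)) (NneH _ _ (by omega) (by omega) (by omega))
      · exact h
      · exact absurd (inj (h.trans e2.symm)) (NneH _ _ (by omega) (by omega) (by omega))
    have q4 : φ (Nc n 4) = Nc n (n-2) := by
      have t := amap _ _ (adjS 3); rw [q3] at t
      rcases nbrE1 _ t with h|h|h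
      · exact absurd (inj (h.trans e2.symm)) (NneH _ _ (by omega) (by omega) (by omega))
      · exact h
      · exact absurd (inj (h.trans q3m.symm)) (NneH _ _ (by omega) (by omega) (by omega))
    have q4m : φ (Nc n (m+4)) = Nc n (m-2) := by
      have t := amap _ _ (adjS (m+3)); rw [q3m] at t
      rcases nbrF _ t with h|h|h
      · exact absurd (inj (h.trans q2m.symm)) (NneH _ _ (by omega) (by omega) (by omega))
      · exact h
      · exact absurd (inj (h.trans q3.symm)) (NneH _ _ (by omega) (by omega) (by omega))
    have q5 : φ (Nc n 5) = Nc n (n-3) := by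
      have t := amap _ _ (adjS 4); rw [q4] at t
      rcases nbrE2 _ t with h|h|h
      · exact absurd (inj (h.trans q3.symm)) (NneH _ _ (by omega) (by omega) (by omega))
      · exact h
      · exact absurd (inj (h.trans q4m.symm)) (NneH _ _ (by omega) (by omega) (by omega))
    refine hasym ⟨?_, ?_⟩
    · have h := hφ (Nc n 3); rw [q3] at h; exact h.symm
    · have h := hφ (Nc n 5); rw [q5] at h; exact h.symm


lemma adj_succ {n : ℕ} (hn : 8 ≤ n) (v : ZMod n) : (MG n).Adj v (v + 1) := by
  rw [circulantGraph_adj]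
  constructor
  · intro h
    have : (1 : ZMod n) = 0 := by linear_combination -h
    have h2 := cast_nen (n := n) (a := 1) (b := 0) (by omega) (by omega) (by omega)
    simp at h2
    exact h2 this
  · right; left; simp

lemma no2 {n : ℕ} (hn : 8 ≤ n) :
    ¬ (∃ c : ZMod n → Fin 2, IsProperColoring (MG n) c ∧ IsDistinguishing (MG n) c) := by
  rintro ⟨c, hp, hd⟩
  have key : ∀ a b d : Fin 2, a ≠ b → b ≠ d → a = d := by decide
  let φ : MG n ≃g MG n :=
    ⟨Equiv.addRight (2 : ZMod n), by
      intro a b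
      simp only [Equiv.coe_addRight]
      exact circulantGraph_adj_translate⟩
  have hcol : ∀ v, c (φ v) = c v := by
    intro v
    have h1 := hp v (v + 1) (adj_succ hn v)
    have h2 := hp (v + 1) (v + 1 + 1) (adj_succ hn (v + 1))
    have : φ v = v + 1 + 1 := by
      show v + 2 = v + 1 + 1
      ring
    rw [this]
    exact key _ _ _ h2.symm h1.symm
  have h0 := hd φ hcol 0
  have : (2 : ZMod n) = 0 := by
    have : (0 : ZMod n) + 2 = 0 := h0
    linear_combination this
  have h2 := cast_nen (n := n) (a := 2) (b := 0) (by omega) (by omega) (by omega)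
  simp at h2
  exact h2 this


/-- value-level coloring, m odd case -/
def fOdd : ℕ → Fin 3 := fun v =>
  if v = 0 ∨ v = 2 ∨ v = 5 then 2
  else if v % 2 = 0 then 0 else 1

/-- value-level coloring, m even case -/
def fEven (m : ℕ) : ℕ → Fin 3 := fun v =>
  if v = 0 ∨ v = 2 ∨ v = m - 1 then 2
  else if v < m then (if v % 2 = 0 then 0 else 1)
  else (if v % 2 = 0 then 1 else 0)

lemma proper_of_local {n m : ℕ} (hm : n = 2 * m) (hm4 : 4 ≤ m) (c : ZMod n → Fin 3)
    (h1 : ∀ x : ZMod n, c x ≠ c (x + 1))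
    (h2 : ∀ x : ZMod n, c x ≠ c (x + Nc n m)) : IsProperColoring (MG n) c := by
  intro x y hxy
  have hdv : ((n / 2 : ℕ) : ZMod n) = Nc n m := by
    rw [show n / 2 = m by omega]; rfl
  rcases (adj_iff (by omega) (by omega) x y).1 hxy with h|h|h
  · rw [h]; exact h1 x
  · rw [h]
    have := h1 (x - 1)
    rw [sub_add_cancel] at this
    exact this.symm
  · rw [h, hdv]; exact h2 x

lemma val_succ {n : ℕ} (hn : 2 ≤ n) (x : ZMod n) :
    (x + 1).val = (x.val + 1) % n := by
  haveI : NeZero n := ⟨by omega⟩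
  haveI : Fact (1 < n) := ⟨by omega⟩
  rw [ZMod.val_add, ZMod.val_one]

lemma val_addm {n m : ℕ} (hm : n = 2 * m) (hm4 : 4 ≤ m) (x : ZMod n) :
    (x + Nc n m).val = (x.val + m) % n := by
  haveI : NeZero n := ⟨by omega⟩
  rw [ZMod.val_add]
  congr 1
  rw [show Nc n m = ((m : ℕ) : ZMod n) from rfl, ZMod.val_cast_of_lt (by omega)]

lemma properOdd {n m : ℕ} (hm : n = 2 * m) (hm7 : 7 ≤ m) (hpar : m % 2 = 1) :
    IsProperColoring (MG n) (fun x : ZMod n => fOdd x.val) := by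
  haveI : NeZero n := ⟨by omega⟩
  refine proper_of_local hm (by omega) _ ?_ ?_
  · intro x
    have hv : x.val < n := ZMod.val_lt x
    rw [val_succ (by omega)]
    set v := x.val with hvv
    have hw : ((v + 1) % n = 0 ∧ v = n - 1) ∨ ((v+1) % n = v + 1 ∧ v < n - 1) := by
      rcases Nat.lt_or_ge (v+1) n with h|h
      · exact Or.inr ⟨Nat.mod_eq_of_lt h, by omega⟩
      · left
        have e : v + 1 = n := by omega
        rw [e, Nat.mod_self]
        exact ⟨rfl, by omega⟩
    rcases hw with ⟨hw, hb⟩|⟨hw, hb⟩ <;> rw [hw] <;> unfold fOdd <;>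
      split_ifs <;> first | decide | (exfalso; omega) | (exfalso; simp only [false_or, or_false] at *; all_goals omega)
  · intro x
    have hv : x.val < n := ZMod.val_lt x
    rw [val_addm hm (by omega)]
    set v := x.val with hvv
    have hw : ((v + m) % n = v + m ∧ v < m) ∨ ((v + m) % n = v - m ∧ m ≤ v) := by
      rcases Nat.lt_or_ge (v + m) n with h|h
      · exact Or.inl ⟨Nat.mod_eq_of_lt h, by omega⟩
      · right
        refine ⟨?_, by omega⟩
        have e : v + m = (v - m) + n := by omega
        rw [e, Nat.add_mod_right, Nat.mod_eq_of_lt (by omega)]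
    rcases hw with ⟨hw, hb⟩|⟨hw, hb⟩ <;> rw [hw] <;> unfold fOdd <;>
      split_ifs <;> first | decide | (exfalso; omega) | (exfalso; simp only [false_or, or_false] at *; all_goals omega)

lemma properEven {n m : ℕ} (hm : n = 2 * m) (hm6 : 6 ≤ m) (hpar : m % 2 = 0) :
    IsProperColoring (MG n) (fun x : ZMod n => fEven m x.val) := by
  haveI : NeZero n := ⟨by omega⟩
  refine proper_of_local hm (by omega) _ ?_ ?_
  · intro x
    have hv : x.val < n := ZMod.val_lt x
    rw [val_succ (by omega)]
    set v := x.val with hvv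
    have hw : ((v + 1) % n = 0 ∧ v = n - 1) ∨ ((v+1) % n = v + 1 ∧ v < n - 1) := by
      rcases Nat.lt_or_ge (v+1) n with h|h
      · exact Or.inr ⟨Nat.mod_eq_of_lt h, by omega⟩
      · left
        have e : v + 1 = n := by omega
        rw [e, Nat.mod_self]
        exact ⟨rfl, by omega⟩
    rcases hw with ⟨hw, hb⟩|⟨hw, hb⟩ <;> rw [hw] <;> unfold fEven <;>
      split_ifs <;> first | decide | (exfalso; omega) | (exfalso; simp only [false_or, or_false] at *; all_goals omega)
  · intro x
    have hv : x.val < n := ZMod.val_lt x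
    rw [val_addm hm (by omega)]
    set v := x.val with hvv
    have hw : ((v + m) % n = v + m ∧ v < m) ∨ ((v + m) % n = v - m ∧ m ≤ v) := by
      rcases Nat.lt_or_ge (v + m) n with h|h
      · exact Or.inl ⟨Nat.mod_eq_of_lt h, by omega⟩
      · right
        refine ⟨?_, by omega⟩
        have e : v + m = (v - m) + n := by omega
        rw [e, Nat.add_mod_right, Nat.mod_eq_of_lt (by omega)]
    rcases hw with ⟨hw, hb⟩|⟨hw, hb⟩ <;> rw [hw] <;> unfold fEven <;>
      split_ifs <;> first | decide | (exfalso; omega) | (exfalso; simp only [false_or, or_false] at *; all_goals omega)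


lemma val_Nc {n k : ℕ} (h : k < n) : (Nc n k).val = k := by
  haveI : NeZero n := ⟨by omega⟩
  exact ZMod.val_cast_of_lt h

lemma adjS' {n m : ℕ} (hm : n = 2*m) (hm4 : 4 ≤ m) (j : ℕ) :
    (MG n).Adj (Nc n j) (Nc n (j+1)) := by
  rw [adj_iff (by omega) (by omega)]
  left
  simp only [Nc]; push_cast; ring

lemma adjC' {n m : ℕ} (hm : n = 2*m) (hm4 : 4 ≤ m) (j : ℕ) :
    (MG n).Adj (Nc n j) (Nc n (j+m)) := by
  rw [adj_iff (by omega) (by omega)]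
  right; right
  rw [show n / 2 = m by omega]
  simp only [Nc]; push_cast; ring

lemma fOdd_eq2 {v : ℕ} (h : fOdd v = 2) : v = 0 ∨ v = 2 ∨ v = 5 := by
  by_cases hc : v = 0 ∨ v = 2 ∨ v = 5
  · exact hc
  · exfalso
    unfold fOdd at h
    rw [if_neg hc] at h
    split_ifs at h <;> exact absurd h (by decide)

lemma fEven_eq2 {m v : ℕ} (h : fEven m v = 2) : v = 0 ∨ v = 2 ∨ v = m - 1 := by
  by_cases hc : v = 0 ∨ v = 2 ∨ v = m - 1
  · exact hc
  · exfalso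
    unfold fEven at h
    rw [if_neg hc] at h
    split_ifs at h <;> exact absurd h (by decide)

lemma self_Nc {n : ℕ} (hn : 0 < n) (x : ZMod n) : x = Nc n x.val := by
  haveI : NeZero n := ⟨by omega⟩
  simp only [Nc]
  rw [ZMod.natCast_val, ZMod.cast_id]

lemma hF2Odd {n m : ℕ} (hm : n = 2*m) (hm7 : 7 ≤ m) :
    ∀ x : ZMod n, (fun x : ZMod n => fOdd x.val) x = 2 → x = Nc n 0 ∨ x = Nc n 2 ∨
      ∃ y z, y ≠ z ∧ (MG n).Adj x y ∧ (MG n).Adj x z ∧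
        (fun x : ZMod n => fOdd x.val) y = 0 ∧ (fun x : ZMod n => fOdd x.val) z = 0 := by
  intro x hx
  simp only at hx
  have hxv := self_Nc (by omega) x
  rcases fOdd_eq2 hx with e|e|e
  · left; rw [hxv, e]
  · right; left; rw [hxv, e]
  · right; right
    refine ⟨Nc n 4, Nc n 6, cast_nen (by omega) (by omega) (by omega), ?_, ?_, ?_, ?_⟩
    · rw [hxv, e]
      exact (adjS' hm (by omega) 4).symm
    · rw [hxv, e]
      exact adjS' hm (by omega) 5
    · simp only
      rw [val_Nc (by omega)]
      decide
    · simp only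
      rw [val_Nc (by omega)]
      decide

lemma hF2Even {n m : ℕ} (hm : n = 2*m) (hm6 : 6 ≤ m) (hpar : m % 2 = 0) :
    ∀ x : ZMod n, (fun x : ZMod n => fEven m x.val) x = 2 → x = Nc n 0 ∨ x = Nc n 2 ∨
      ∃ y z, y ≠ z ∧ (MG n).Adj x y ∧ (MG n).Adj x z ∧
        (fun x : ZMod n => fEven m x.val) y = 0 ∧ (fun x : ZMod n => fEven m x.val) z = 0 := by
  intro x hx
  simp only at hx
  have hxv := self_Nc (by omega) x
  rcases fEven_eq2 hx with e|e|e
  · left; rw [hxv, e]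
  · right; left; rw [hxv, e]
  · right; right
    refine ⟨Nc n (m-2), Nc n (n-1), cast_nen (by omega) (by omega) (by omega), ?_, ?_, ?_, ?_⟩
    · rw [hxv, e]
      have := (adjS' hm (by omega) (m-2)).symm
      rwa [show m - 2 + 1 = m - 1 by omega] at this
    · rw [hxv, e]
      have := adjC' hm (by omega) (m-1)
      rwa [show m - 1 + m = n - 1 by omega] at this
    · simp only
      rw [val_Nc (by omega)]
      unfold fEven
      split_ifs <;> first | rfl | (exfalso; omega)
    · simp only
      rw [val_Nc (by omega)]
      unfold fEven
      split_ifs <;> first | rfl | (exfalso; omega)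


abbrev R8 (a b : ZMod 8) : Prop := b = a + 1 ∨ b = a - 1 ∨ b = a + 4
def c8 : ZMod 8 → Fin 3 := ![2,1,2,0,1,2,0,1]

lemma adj8 (a b : ZMod 8) : (MG 8).Adj a b ↔ R8 a b := by
  have := adj_iff (n := 8) (by norm_num) (by norm_num) a b
  rw [this]
  norm_num [R8]

lemma small8 :
    ∃ c : ZMod 8 → Fin 3, IsProperColoring (MG 8) c ∧ IsDistinguishing (MG 8) c := by
  refine ⟨c8, ?_, ?_⟩
  · intro x y hxy
    have h : R8 x y := (adj8 x y).1 hxy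
    revert h
    revert x y
    decide
  · intro φ hφ
    have amap : ∀ x y : ZMod 8, R8 x y → R8 (φ x) (φ y) :=
      fun x y h => (adj8 _ _).1 (φ.map_rel_iff.mpr ((adj8 _ _).2 h))
    have rrev : ∀ x y : ZMod 8, R8 (φ x) (φ y) → R8 x y :=
      fun x y h => (adj8 _ _).1 (φ.map_rel_iff.mp ((adj8 _ _).2 h))
    have inj : Function.Injective φ := φ.injective
    -- φ 0 = 0
    have hP1 : ∀ x : ZMod 8, c8 x = 2 → (∀ y, R8 x y → c8 y ≠ 0) → x = 0 := by decide
    have t0 : φ 0 = 0 := by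
      refine hP1 _ ((hφ 0).trans (by decide)) ?_
      intro y hy
      obtain ⟨y', rfl⟩ := φ.surjective y
      have h1 : R8 0 y' := rrev _ _ hy
      have hkey : ∀ y : ZMod 8, R8 0 y → c8 y ≠ 0 := by decide
      rw [hφ y']
      exact hkey y' h1
    -- φ 2 = 2
    have hP2 : ∀ x : ZMod 8, c8 x = 2 →
        (∃ y z, y ≠ z ∧ R8 x y ∧ R8 x z ∧ c8 y = 0 ∧ c8 z = 0) → x = 2 := by decide
    have t2 : φ 2 = 2 := by
      refine hP2 _ ((hφ 2).trans (by decide)) ?_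
      refine ⟨φ 3, φ 6, fun h => ?_, amap _ _ (by decide), amap _ _ (by decide), ?_, ?_⟩
      · exact absurd (inj h) (by decide)
      · rw [hφ 3]; decide
      · rw [hφ 6]; decide
    -- φ 5 = 5
    have hmem : ∀ x : ZMod 8, c8 x = 2 → x = 0 ∨ x = 2 ∨ x = 5 := by decide
    have t5 : φ 5 = 5 := by
      rcases hmem _ ((hφ 5).trans (by decide)) with h|h|h
      · exact absurd (inj (h.trans t0.symm)) (by decide)
      · exact absurd (inj (h.trans t2.symm)) (by decide)
      · exact h
    have t1 : φ 1 = 1 := by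
      have hc : ∀ x : ZMod 8, R8 0 x → R8 2 x → x = 1 := by decide
      have a1 : R8 0 (φ 1) := by have := amap _ _ (show R8 0 1 by decide); rwa [t0] at this
      have a2 : R8 2 (φ 1) := by have := amap _ _ (show R8 2 1 by decide); rwa [t2] at this
      exact hc _ a1 a2
    have t4 : φ 4 = 4 := by
      have hc : ∀ x : ZMod 8, R8 0 x → R8 5 x → x ≠ 1 → x = 4 := by decide
      have a1 : R8 0 (φ 4) := by have := amap _ _ (show R8 0 4 by decide); rwa [t0] at this
      have a2 : R8 5 (φ 4) := by have := amap _ _ (show R8 5 4 by decide); rwa [t5] at this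
      exact hc _ a1 a2 (fun h => absurd (inj (h.trans t1.symm)) (by decide))
    have t6 : φ 6 = 6 := by
      have hc : ∀ x : ZMod 8, R8 2 x → R8 5 x → x ≠ 1 → x = 6 := by decide
      have a1 : R8 2 (φ 6) := by have := amap _ _ (show R8 2 6 by decide); rwa [t2] at this
      have a2 : R8 5 (φ 6) := by have := amap _ _ (show R8 5 6 by decide); rwa [t5] at this
      exact hc _ a1 a2 (fun h => absurd (inj (h.trans t1.symm)) (by decide))
    have t3 : φ 3 = 3 := by
      have hc : ∀ x : ZMod 8, R8 2 x → x ≠ 1 → x ≠ 6 → x = 3 := by decide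
      have a1 : R8 2 (φ 3) := by have := amap _ _ (show R8 2 3 by decide); rwa [t2] at this
      exact hc _ a1 (fun h => absurd (inj (h.trans t1.symm)) (by decide))
        (fun h => absurd (inj (h.trans t6.symm)) (by decide))
    have t7 : φ 7 = 7 := by
      have hc : ∀ x : ZMod 8, R8 0 x → x ≠ 1 → x ≠ 4 → x = 7 := by decide
      have a1 : R8 0 (φ 7) := by have := amap _ _ (show R8 0 7 by decide); rwa [t0] at this
      exact hc _ a1 (fun h => absurd (inj (h.trans t1.symm)) (by decide))
        (fun h => absurd (inj (h.trans t4.symm)) (by decide))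
    intro v
    have hall : ∀ w : ZMod 8, w = 0 ∨ w = 1 ∨ w = 2 ∨ w = 3 ∨ w = 4 ∨ w = 5 ∨ w = 6 ∨ w = 7 := by
      decide
    rcases hall v with rfl|rfl|rfl|rfl|rfl|rfl|rfl|rfl <;> assumption


abbrev R10 (a b : ZMod 10) : Prop := b = a + 1 ∨ b = a - 1 ∨ b = a + 5
def c10 : ZMod 10 → Fin 3 := ![2,1,2,1,2,1,0,1,2,0]

lemma adj10 (a b : ZMod 10) : (MG 10).Adj a b ↔ R10 a b := by
  have := adj_iff (n := 10) (by norm_num) (by norm_num) a b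
  rw [this]
  norm_num [R10]

lemma small10 :
    ∃ c : ZMod 10 → Fin 3, IsProperColoring (MG 10) c ∧ IsDistinguishing (MG 10) c := by
  refine ⟨c10, ?_, ?_⟩
  · intro x y hxy
    have h : R10 x y := (adj10 x y).1 hxy
    revert h
    revert x y
    decide
  · intro φ hφ
    have amap : ∀ x y : ZMod 10, R10 x y → R10 (φ x) (φ y) :=
      fun x y h => (adj10 _ _).1 (φ.map_rel_iff.mpr ((adj10 _ _).2 h))
    have rrev : ∀ x y : ZMod 10, R10 (φ x) (φ y) → R10 x y :=
      fun x y h => (adj10 _ _).1 (φ.map_rel_iff.mp ((adj10 _ _).2 h))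
    have inj : Function.Injective φ := φ.injective
    have hmem : ∀ x : ZMod 10, c10 x = 2 → x = 0 ∨ x = 2 ∨ x = 4 ∨ x = 8 := by decide
    -- φ 2 = 2 : unique 2-coloured vertex with no 0-coloured neighbour
    have hP1 : ∀ x : ZMod 10, c10 x = 2 → (∀ y, R10 x y → c10 y ≠ 0) → x = 2 := by decide
    have t2 : φ 2 = 2 := by
      refine hP1 _ ((hφ 2).trans (by decide)) ?_
      intro y hy
      obtain ⟨y', rfl⟩ := φ.surjective y
      have h1 : R10 2 y' := rrev _ _ hy
      have hkey : ∀ y : ZMod 10, R10 2 y → c10 y ≠ 0 := by decide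
      rw [hφ y']
      exact hkey y' h1
    -- φ 8 = 8 : 2-coloured, ≠ 2, two distinct common neighbours with 2
    have hP8 : ∀ x : ZMod 10, c10 x = 2 → x ≠ 2 →
        (∃ y z, y ≠ z ∧ R10 x y ∧ R10 x z ∧ R10 2 y ∧ R10 2 z) → x = 8 := by decide
    have t8 : φ 8 = 8 := by
      refine hP8 _ ((hφ 8).trans (by decide))
        (fun h => absurd (inj (h.trans t2.symm)) (by decide)) ?_
      refine ⟨φ 3, φ 7, fun h => absurd (inj h) (by decide),
        amap _ _ (by decide), amap _ _ (by decide), ?_, ?_⟩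
      · have := amap _ _ (show R10 2 3 by decide); rwa [t2] at this
      · have := amap _ _ (show R10 2 7 by decide); rwa [t2] at this
    -- φ 0 = 0 and φ 4 = 4
    have hU : ∀ y z : ZMod 10, (R10 0 y ∧ R10 8 y) → (R10 0 z ∧ R10 8 z) → y = z := by decide
    have t0 : φ 0 = 0 := by
      rcases hmem _ ((hφ 0).trans (by decide)) with h|h|h|h
      · exact h
      · exact absurd (inj (h.trans t2.symm)) (by decide)
      · -- φ 0 = 4 : contradiction
        exfalso
        have t4 : φ 4 = 0 := by
          rcases hmem _ ((hφ 4).trans (by decide)) with g|g|g|g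
          · exact g
          · exact absurd (inj (g.trans t2.symm)) (by decide)
          · exact absurd (inj (g.trans h.symm)) (by decide)
          · exact absurd (inj (g.trans t8.symm)) (by decide)
        have a3 : R10 0 (φ 3) := by
          have := amap _ _ (show R10 4 3 by decide); rwa [t4] at this
        have b3 : R10 8 (φ 3) := by
          have := amap _ _ (show R10 8 3 by decide); rwa [t8] at this
        have a9 : R10 0 (φ 9) := by
          have := amap _ _ (show R10 4 9 by decide); rwa [t4] at this
        have b9 : R10 8 (φ 9) := by
          have := amap _ _ (show R10 8 9 by decide); rwa [t8] at this
        exact absurd (inj (hU _ _ ⟨a3, b3⟩ ⟨a9, b9⟩)) (by decide)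
      · exact absurd (inj (h.trans t8.symm)) (by decide)
    have t4 : φ 4 = 4 := by
      rcases hmem _ ((hφ 4).trans (by decide)) with h|h|h|h
      · exact absurd (inj (h.trans t0.symm)) (by decide)
      · exact absurd (inj (h.trans t2.symm)) (by decide)
      · exact h
      · exact absurd (inj (h.trans t8.symm)) (by decide)
    have t9 : φ 9 = 9 := by
      have hc : ∀ x : ZMod 10, R10 0 x → R10 8 x → x = 9 := by decide
      have a1 : R10 0 (φ 9) := by have := amap _ _ (show R10 0 9 by decide); rwa [t0] at this
      have a2 : R10 8 (φ 9) := by have := amap _ _ (show R10 8 9 by decide); rwa [t8] at this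
      exact hc _ a1 a2
    have t3 : φ 3 = 3 := by
      have hc : ∀ x : ZMod 10, R10 4 x → R10 8 x → x ≠ 9 → x = 3 := by decide
      have a1 : R10 4 (φ 3) := by have := amap _ _ (show R10 4 3 by decide); rwa [t4] at this
      have a2 : R10 8 (φ 3) := by have := amap _ _ (show R10 8 3 by decide); rwa [t8] at this
      exact hc _ a1 a2 (fun h => absurd (inj (h.trans t9.symm)) (by decide))
    have t5 : φ 5 = 5 := by
      have hc : ∀ x : ZMod 10, R10 4 x → x ≠ 3 → x ≠ 9 → x = 5 := by decide
      have a1 : R10 4 (φ 5) := by have := amap _ _ (show R10 4 5 by decide); rwa [t4] at this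
      exact hc _ a1 (fun h => absurd (inj (h.trans t3.symm)) (by decide))
        (fun h => absurd (inj (h.trans t9.symm)) (by decide))
    have t1 : φ 1 = 1 := by
      have hc : ∀ x : ZMod 10, R10 0 x → x ≠ 9 → x ≠ 5 → x = 1 := by decide
      have a1 : R10 0 (φ 1) := by have := amap _ _ (show R10 0 1 by decide); rwa [t0] at this
      exact hc _ a1 (fun h => absurd (inj (h.trans t9.symm)) (by decide))
        (fun h => absurd (inj (h.trans t5.symm)) (by decide))
    have t7 : φ 7 = 7 := by
      have hc : ∀ x : ZMod 10, R10 8 x → x ≠ 9 → x ≠ 3 → x = 7 := by decide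
      have a1 : R10 8 (φ 7) := by have := amap _ _ (show R10 8 7 by decide); rwa [t8] at this
      exact hc _ a1 (fun h => absurd (inj (h.trans t9.symm)) (by decide))
        (fun h => absurd (inj (h.trans t3.symm)) (by decide))
    have t6 : φ 6 = 6 := by
      have hc : ∀ x : ZMod 10, R10 5 x → x ≠ 4 → x ≠ 0 → x = 6 := by decide
      have a1 : R10 5 (φ 6) := by have := amap _ _ (show R10 5 6 by decide); rwa [t5] at this
      exact hc _ a1 (fun h => absurd (inj (h.trans t4.symm)) (by decide))
        (fun h => absurd (inj (h.trans t0.symm)) (by decide))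
    intro v
    have hall : ∀ w : ZMod 10, w = 0 ∨ w = 1 ∨ w = 2 ∨ w = 3 ∨ w = 4 ∨ w = 5 ∨ w = 6 ∨
        w = 7 ∨ w = 8 ∨ w = 9 := by decide
    rcases hall v with rfl|rfl|rfl|rfl|rfl|rfl|rfl|rfl|rfl|rfl <;> assumption



lemma part1_big {n m : ℕ} (hm : n = 2 * m) (hm6 : 6 ≤ m) :
    ∃ c : ZMod n → Fin 3, IsProperColoring (MG n) c ∧ IsDistinguishing (MG n) c := by
  rcases Nat.even_or_odd m with he|ho
  · -- m even
    have hpar : m % 2 = 0 := Nat.even_iff.mp he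
    have hv : ∀ k : ℕ, k < n → (Nc n k).val = k := fun k hk => val_Nc hk
    refine ⟨fun x : ZMod n => fEven m x.val, properEven hm hm6 hpar, ?_⟩
    refine bootstrap hm hm6 _ ?_ ?_ ?_ ?_ ?_ ?_ (hF2Even hm hm6 hpar)
    · rw [hv 0 (by omega)]
      unfold fEven
      split_ifs <;> first | rfl | (exfalso; omega) | (exfalso; simp only [false_or, or_false] at *; all_goals omega)
    · rw [hv 2 (by omega)]
      unfold fEven
      split_ifs <;> first | rfl | (exfalso; omega) | (exfalso; simp only [false_or, or_false] at *; all_goals omega)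
    · rw [hv 1 (by omega)]
      unfold fEven
      split_ifs <;> first | rfl | (exfalso; omega) | (exfalso; simp only [false_or, or_false] at *; all_goals omega)
    · rw [hv 3 (by omega)]
      unfold fEven
      split_ifs <;> first | rfl | (exfalso; omega) | (exfalso; simp only [false_or, or_false] at *; all_goals omega)
    · rw [hv m (by omega)]
      unfold fEven
      split_ifs <;> first | rfl | (exfalso; omega) | (exfalso; simp only [false_or, or_false] at *; all_goals omega)
    · rintro ⟨hA, -⟩
      rw [hv 3 (by omega), hv (n-1) (by omega)] at hA
      have e3 : fEven m 3 = 1 := by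
        unfold fEven
        split_ifs <;> first | rfl | (exfalso; omega) | (exfalso; simp only [false_or, or_false] at *; all_goals omega)
      have en : fEven m (n-1) = 0 := by
        unfold fEven
        split_ifs <;> first | rfl | (exfalso; omega) | (exfalso; simp only [false_or, or_false] at *; all_goals omega)
      rw [e3, en] at hA
      exact absurd hA (by decide)
  · -- m odd
    have hpar : m % 2 = 1 := Nat.odd_iff.mp ho
    have hm7 : 7 ≤ m := by omega
    have hv : ∀ k : ℕ, k < n → (Nc n k).val = k := fun k hk => val_Nc hk
    refine ⟨fun x : ZMod n => fOdd x.val, properOdd hm hm7 hpar, ?_⟩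
    refine bootstrap hm hm6 _ ?_ ?_ ?_ ?_ ?_ ?_ (hF2Odd hm hm7)
    · rw [hv 0 (by omega)]; decide
    · rw [hv 2 (by omega)]; decide
    · rw [hv 1 (by omega)]; decide
    · rw [hv 3 (by omega)]; decide
    · rw [hv m (by omega)]
      unfold fOdd
      split_ifs <;> first | rfl | (exfalso; omega) | (exfalso; simp only [false_or, or_false] at *; all_goals omega)
    · rintro ⟨-, hB⟩
      rw [hv 5 (by omega), hv (n-3) (by omega)] at hB
      have e5 : fOdd 5 = 2 := by decide
      have en : fOdd (n-3) = 1 := by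
        unfold fOdd
        split_ifs <;> first | rfl | (exfalso; omega) | (exfalso; simp only [false_or, or_false] at *; all_goals omega)
      rw [e5, en] at hB
      exact absurd hB (by decide)

end MA

/-- For every even integer `n ≥ 8`, the Möbius ladder `C_n(1, n/2)` has distinguishing
chromatic number 3: it admits a distinguishing proper 3-coloring, and no distinguishing
proper 2-coloring. -/
theorem stmt_5 (n : ℕ) (hn : 8 ≤ n) (hev : Even n) :
    (∃ c : ZMod n → Fin 3,
      IsProperColoring (circulantGraph ({1, ((n / 2 : ℕ) : ZMod n)} : Set (ZMod n))) c ∧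
      IsDistinguishing (circulantGraph ({1, ((n / 2 : ℕ) : ZMod n)} : Set (ZMod n))) c) ∧
    ¬ (∃ c : ZMod n → Fin 2,
      IsProperColoring (circulantGraph ({1, ((n / 2 : ℕ) : ZMod n)} : Set (ZMod n))) c ∧
      IsDistinguishing (circulantGraph ({1, ((n / 2 : ℕ) : ZMod n)} : Set (ZMod n))) c) := by
  obtain ⟨k, hk⟩ := hev
  constructor
  · rcases Nat.lt_or_ge n 12 with h|h
    · have h810 : n = 8 ∨ n = 10 := by omega
      rcases h810 with rfl|rfl
      · exact MA.small8
      · exact MA.small10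
    · exact MA.part1_big (m := k) (by omega) (by omega)
  · exact MA.no2 hn
end

section
/- For even n ≥ 10, the circulant graph C_n(1, n/2 − 1) is isomorphic to the wreath graph W(n/2, 2); in particular, for every vertex v_i, the vertices v_i and v_{i+n/2} have exactly the same set of neighbors. -/
/-! Write `n = 2m`. Since `m - 1 ≡ -1` and `-(m - 1) ≡ m + 1 ≡ 1 (mod m)`, the connection set
`{±1, ±(m - 1)}` of `C_{2m}(1, m - 1)` is exactly the preimage of `{±1}` under the reduction
`ℤ/2m → ℤ/m`, so `x ~ y` iff `x ≡ y ± 1 (mod m)`. Hence the two elements `x, x + m` of each fibre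
are twins, and `x ↦ (x mod m, ⌊x / m⌋)` is an isomorphism onto `W(m, 2)`. -/

open SimpleGraph

/-- The wreath graph `W(a, 2)`: vertex set `ZMod a × Fin 2`, with `(i, s)` adjacent to
`(j, t)` iff `i − j ≡ ±1 (mod a)`. -/
def wreathGraph (a : ℕ) : SimpleGraph (ZMod a × Fin 2) where
  Adj p q := p ≠ q ∧ (p.1 - q.1 = 1 ∨ q.1 - p.1 = 1)
  symm := by
    constructor
    intro p q h
    exact ⟨Ne.symm h.1, h.2.symm⟩
  loopless := by
    constructor
    intro p h
    exact h.1 rfl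

namespace ZMod

theorem natCast_add_self_eq_zero (m : ℕ) : (m : ZMod (2 * m)) + m = 0 := by
  rw [← Nat.cast_add, ← two_mul, natCast_self]

abbrev castHomHalf (m : ℕ) : ZMod (2 * m) →+* ZMod m :=
  castHom (dvd_mul_left m 2) (ZMod m)

variable {m : ℕ} [NeZero m]

theorem castHomHalf_eq_zero_iff (e : ZMod (2 * m)) : castHomHalf m e = 0 ↔ e = 0 ∨ e = m := by
  constructor
  · intro he
    obtain ⟨k, hk⟩ : m ∣ e.val := by
      rwa [← natCast_eq_zero_iff, natCast_val, ← castHom_apply]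
    have hk2 : k < 2 := by
      have := e.val_lt
      by_contra! h
      nlinarith [Nat.pos_of_ne_zero (NeZero.ne m)]
    rw [← natCast_zmod_val e, hk]
    interval_cases k <;> simp
  · rintro (rfl | rfl) <;> simp

theorem castHomHalf_eq_one_iff (d : ZMod (2 * m)) :
    castHomHalf m d = 1 ↔ d = 1 ∨ -d = ((m - 1 : ℕ) : ZMod (2 * m)) := by
  rw [← sub_eq_zero, ← map_one (castHomHalf m), ← map_sub, castHomHalf_eq_zero_iff,
    Nat.cast_sub NeZero.one_le, Nat.cast_one, sub_eq_zero]
  have := natCast_add_self_eq_zero m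
  constructor <;> rintro (h | h)
  · left; exact h
  · right; linear_combination -h - this
  · left; exact h
  · right; linear_combination -h - this

variable (m) in
def prodFinTwoEquiv : ZMod (2 * m) ≃ ZMod m × Fin 2 where
  toFun x := (castHomHalf m x, ⟨x.val / m, Nat.div_lt_of_lt_mul (mul_comm 2 m ▸ x.val_lt)⟩)
  invFun p := ((p.1.val + m * p.2.val : ℕ) : ZMod (2 * m))
  left_inv x := by
    simp only [castHom_apply, cast_eq_val, val_natCast, Nat.mod_add_div, natCast_zmod_val]
  right_inv := by
    rintro ⟨i, s⟩
    have hlt : i.val + m * s.val < 2 * m := by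
      have := i.val_lt
      have : m * s.val ≤ m * 1 := Nat.mul_le_mul_left _ (Nat.le_of_lt_succ s.isLt)
      omega
    ext
    · change castHomHalf m ((i.val + m * s.val : ℕ) : ZMod (2 * m)) = i
      rw [map_natCast, Nat.cast_add, Nat.cast_mul, natCast_self, zero_mul, add_zero,
        natCast_zmod_val]
    · change ((i.val + m * s.val : ℕ) : ZMod (2 * m)).val / m = s.val
      rw [val_cast_of_lt hlt, Nat.add_mul_div_left _ _ (Nat.pos_of_neZero m),
        Nat.div_eq_of_lt i.val_lt, zero_add]

@[simp]
theorem prodFinTwoEquiv_fst (x : ZMod (2 * m)) : (prodFinTwoEquiv m x).1 = castHomHalf m x := rfl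

end ZMod

open ZMod

section

variable {m : ℕ} [NeZero m]

theorem circulantGraph_adj_iff_castHomHalf {x y : ZMod (2 * m)} :
    (circulantGraph {1, ((m - 1 : ℕ) : ZMod (2 * m))}).Adj x y ↔
      x ≠ y ∧ (castHomHalf m x - castHomHalf m y = 1 ∨ castHomHalf m y - castHomHalf m x = 1) := by
  rw [circulantGraph_adj, ← map_sub, ← map_sub, castHomHalf_eq_one_iff, castHomHalf_eq_one_iff,
    neg_sub, neg_sub]
  simp only [Set.mem_insert_iff, Set.mem_singleton_iff]
  tauto

theorem circulantGraph_adj_iff_castHomHalf_of_one_lt [Fact (1 < m)] {x y : ZMod (2 * m)} :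
    (circulantGraph {1, ((m - 1 : ℕ) : ZMod (2 * m))}).Adj x y ↔
      castHomHalf m x - castHomHalf m y = 1 ∨ castHomHalf m y - castHomHalf m x = 1 := by
  rw [circulantGraph_adj_iff_castHomHalf, and_iff_right_iff_imp]
  rintro h rfl
  simp at h

variable (m) in
def circulantGraphIsoWreathGraph :
    circulantGraph {1, ((m - 1 : ℕ) : ZMod (2 * m))} ≃g wreathGraph m where
  toEquiv := prodFinTwoEquiv m
  map_rel_iff' {x y} := by
    rw [circulantGraph_adj_iff_castHomHalf, ← (prodFinTwoEquiv m).injective.ne_iff]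
    rfl

theorem circulantGraph_adj_add_half_iff [Fact (1 < m)] (x y : ZMod (2 * m)) :
    (circulantGraph {1, ((m - 1 : ℕ) : ZMod (2 * m))}).Adj (x + m) y ↔
      (circulantGraph {1, ((m - 1 : ℕ) : ZMod (2 * m))}).Adj x y := by
  simp only [circulantGraph_adj_iff_castHomHalf_of_one_lt, map_add, map_natCast, natCast_self,
    add_zero]

end

/-- For even `n ≥ 10`, `C_n(1, n/2 − 1)` is isomorphic to the wreath graph `W(n/2, 2)`;
in particular `v_i` and `v_{i + n/2}` have exactly the same neighbors. -/
theorem stmt_7 (n : ℕ) (hn : 10 ≤ n) (hev : Even n) :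
    Nonempty (circulantGraph ({1, ((n / 2 - 1 : ℕ) : ZMod n)} : Set (ZMod n)) ≃g
        wreathGraph (n / 2)) ∧
    ∀ i w : ZMod n,
      (circulantGraph ({1, ((n / 2 - 1 : ℕ) : ZMod n)} : Set (ZMod n))).Adj i w ↔
      (circulantGraph ({1, ((n / 2 - 1 : ℕ) : ZMod n)} : Set (ZMod n))).Adj
        (i + ((n / 2 : ℕ) : ZMod n)) w := by
  obtain ⟨m, rfl⟩ := hev
  rw [← two_mul, Nat.mul_div_cancel_left m two_pos]
  have : NeZero m := ⟨by omega⟩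
  have : Fact (1 < m) := ⟨by omega⟩
  exact ⟨⟨circulantGraphIsoWreathGraph m⟩, fun i w => (circulantGraph_adj_add_half_iff i w).symm⟩
end

section
/- For even n ≥ 10, the distinguishing chromatic number of C_n(1, n/2 − 1) is at least 5; i.e., no proper coloring with at most 4 colors of C_n(1, n/2 − 1) is distinguishing. -/
open SimpleGraph

private lemma fin4_pigeon : ∀ a b p q r : Fin 4, a ≠ b → a ≠ p → a ≠ q → b ≠ p → b ≠ q →
    p ≠ q → r ≠ p → r ≠ q → r = a ∨ r = b := by decide

/-- For even `n ≥ 10`, no proper coloring of `C_n(1, n/2 − 1)` with at most 4 colors is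
distinguishing; i.e. the distinguishing chromatic number is at least 5. -/
theorem stmt_9 (n : ℕ) (hn : 10 ≤ n) (hev : Even n) :
    ¬ ∃ c : ZMod n → Fin 4,
      IsProperColoring (circulantGraph ({1, ((n / 2 - 1 : ℕ) : ZMod n)} : Set (ZMod n))) c ∧
      IsDistinguishing (circulantGraph ({1, ((n / 2 - 1 : ℕ) : ZMod n)} : Set (ZMod n))) c := by
  rintro ⟨c, hp, hd⟩
  obtain ⟨r, hr⟩ := hev
  have hnz : NeZero n := ⟨by omega⟩
  classical
  set k : ZMod n := ((n / 2 - 1 : ℕ) : ZMod n) with hkdef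
  set G := circulantGraph ({1, k} : Set (ZMod n)) with hG
  set m : ZMod n := ((n / 2 : ℕ) : ZMod n) with hmdef
  have hcast : ∀ a : ℕ, 0 < a → a < n → ((a : ZMod n) ≠ 0) := by
    intro a h1 h2 h
    rw [ZMod.natCast_eq_zero_iff] at h
    exact absurd (Nat.le_of_dvd h1 h) (by omega)
  have hm : m + m = 0 := by
    rw [hmdef, ← Nat.cast_add, (by omega : n / 2 + n / 2 = n), ZMod.natCast_self]
  have hk : k = m - 1 := by
    have h' : ((n / 2 - 1 : ℕ) : ZMod n) + ((1 : ℕ) : ZMod n) = ((n / 2 : ℕ) : ZMod n) := by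
      rw [← Nat.cast_add]
      congr 1
      omega
    rw [eq_sub_iff_add_eq, hkdef, hmdef]
    simpa using h'
  have h1nz : (1 : ZMod n) ≠ 0 := by
    have := hcast 1 (by omega) (by omega); simpa using this
  have hknz : k ≠ 0 := by rw [hkdef]; exact hcast _ (by omega) (by omega)
  have hmnz : m ≠ 0 := by rw [hmdef]; exact hcast _ (by omega) (by omega)
  have h2nz : (2 : ZMod n) ≠ 0 := by
    have := hcast 2 (by omega) (by omega); simpa using this
  have h2m : (2 : ZMod n) + m ≠ 0 := by
    have := hcast (2 + n / 2) (by omega) (by omega)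
    rw [hmdef]; push_cast at this ⊢; rwa [add_comm] at this ⊢
  -- adjacency characterization
  have adj_iff : ∀ x y : ZMod n,
      G.Adj x y ↔ (x - y = 1 ∨ x - y = k ∨ y - x = 1 ∨ y - x = k) := by
    intro x y
    rw [hG]
    simp only [circulantGraph, fromRel_adj, Set.mem_insert_iff, Set.mem_singleton_iff]
    constructor
    · rintro ⟨-, (h | h) | (h | h)⟩ <;> tauto
    · intro h
      refine ⟨?_, by tauto⟩
      rintro rfl
      rcases h with h | h | h | h <;> rw [sub_self] at h <;>
        first
          | exact h1nz h.symm
          | exact hknz h.symm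
  have adjm : ∀ x y : ZMod n, G.Adj x y → G.Adj (x + m) y := by
    intro x y h
    rw [adj_iff] at h ⊢
    rcases h with h | h | h | h
    · right; right; right; linear_combination -h - hk - hm
    · right; right; left; linear_combination -h - hk - hm
    · right; left; linear_combination -h - hk
    · left; linear_combination -h - hk
  have adjmL : ∀ x y : ZMod n, G.Adj x y ↔ G.Adj (x + m) y := by
    intro x y
    constructor
    · exact adjm x y
    · intro h
      have := adjm _ _ h
      rwa [add_assoc, hm, add_zero] at this
  have adjmR : ∀ x y : ZMod n, G.Adj x y ↔ G.Adj x (y + m) := by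
    intro x y
    rw [adj_comm, adjmL, adj_comm]
  have adjtrans : ∀ x y t : ZMod n, G.Adj (x + t) (y + t) ↔ G.Adj x y := by
    intro x y t
    rw [adj_iff, adj_iff, (by ring : x + t - (y + t) = x - y),
      (by ring : y + t - (x + t) = y - x)]
  have adj1 : ∀ x : ZMod n, G.Adj x (x + 1) := by
    intro x
    rw [adj_iff]
    right; right; left; ring
  -- automorphism construction
  have mkaut : ∀ (f : ZMod n → ZMod n) (t : ZMod n),
      (∀ x, f x = x + t ∨ f x = x + t + m) → Function.Injective f →
      ∃ φ : G ≃g G, ∀ x, φ x = f x := by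
    intro f t hf hinj
    have hbij : Function.Bijective f := Finite.injective_iff_bijective.mp hinj
    have hadj : ∀ x y, G.Adj (f x) (f y) ↔ G.Adj x y := by
      intro x y
      rcases hf x with h1 | h1 <;> rcases hf y with h2 | h2 <;> rw [h1, h2]
      · exact adjtrans x y t
      · rw [← adjmR]; exact adjtrans x y t
      · rw [← adjmL]; exact adjtrans x y t
      · rw [← adjmL, ← adjmR]; exact adjtrans x y t
    exact ⟨⟨Equiv.ofBijective f hbij, hadj _ _⟩, fun x => rfl⟩
  by_cases hex : ∃ a, c (a + m) = c a
  · -- a twin pair with equal colors: swap it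
    obtain ⟨a, ha⟩ := hex
    set f : ZMod n → ZMod n := fun x => if x = a ∨ x = a + m then x + m else x with hfdef
    have hfa : f a = a + m := by simp [hfdef]
    have hfam : f (a + m) = a := by
      rw [hfdef]
      simp only [or_true, if_pos, add_assoc, hm, add_zero]
    have hinv : ∀ x, f (f x) = x := by
      intro x
      by_cases h : x = a ∨ x = a + m
      · rcases h with rfl | rfl
        · rw [hfa, hfam]
        · rw [hfam, hfa]
      · have hx : f x = x := by rw [hfdef]; simp [h]
        rw [hx, hx]
    have hinj : Function.Injective f := fun x y hxy => by
      rw [← hinv x, hxy, hinv]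
    have hf : ∀ x, f x = x + 0 ∨ f x = x + 0 + m := by
      intro x
      rw [hfdef]
      dsimp only
      split_ifs
      · right; ring
      · left; ring
    have hcpres : ∀ x, c (f x) = c x := by
      intro x
      rw [hfdef]
      dsimp only
      split_ifs with h
      · rcases h with rfl | rfl
        · exact ha
        · rw [add_assoc, hm, add_zero]; exact ha.symm
      · rfl
    obtain ⟨φ, hφ⟩ := mkaut f 0 hf hinj
    have := hd φ (fun v => by rw [hφ]; exact hcpres v) a
    rw [hφ, hfa] at this
    exact hmnz (by rwa [add_eq_left] at this)
  · push_neg at hex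
    have key : ∀ x : ZMod n, c (x + 2) = c x ∨ c (x + 2) = c (x + m) := by
      intro x
      have e1 : G.Adj x (x + 1) := adj1 x
      have e2 : G.Adj x (x + 1 + m) := (adjmR _ _).mp e1
      have e3 : G.Adj (x + m) (x + 1) := (adjmL _ _).mp e1
      have e4 : G.Adj (x + m) (x + 1 + m) := (adjmR _ _).mp e3
      have e5 : G.Adj (x + 1) (x + 2) := by
        have := adj1 (x + 1)
        rwa [show x + 1 + 1 = x + 2 by ring] at this
      have e6 : G.Adj (x + 1 + m) (x + 2) := (adjmL _ _).mp e5
      exact fin4_pigeon (c x) (c (x + m)) (c (x + 1)) (c (x + 1 + m)) (c (x + 2))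
        (fun h => hex x h.symm) (hp _ _ e1) (hp _ _ e2) (hp _ _ e3) (hp _ _ e4)
        (fun h => hex (x + 1) h.symm) (fun h => hp _ _ e5 h.symm) (fun h => hp _ _ e6 h.symm)
    set f : ZMod n → ZMod n := fun x => if c (x + 2) = c x then x + 2 else x + 2 + m with hfdef
    have hf : ∀ x, f x = x + 2 ∨ f x = x + 2 + m := by
      intro x
      rw [hfdef]
      dsimp only
      split_ifs
      · left; rfl
      · right; rfl
    have hcpres : ∀ x, c (f x) = c x := by
      intro x
      rw [hfdef]
      dsimp only
      split_ifs with h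
      · exact h
      · have h1 : c (x + 2) = c (x + m) := (key x).resolve_left h
        have h2 := key (x + m)
        rw [show x + m + m = x by rw [add_assoc, hm, add_zero],
          show x + m + 2 = x + 2 + m by ring] at h2
        rcases h2 with h2 | h2
        · exact absurd (h2.trans h1.symm) (hex (x + 2))
        · exact h2
    have hinj : Function.Injective f := by
      intro x y hxy
      rw [hfdef] at hxy
      dsimp only at hxy
      split_ifs at hxy with h1 h2 h2
      · exact add_right_cancel hxy
      · exfalso
        have hy : c (y + 2) = c (y + m) := (key y).resolve_left h2
        have hx : x = y + m := by linear_combination hxy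
        rw [hx] at h1
        exact hex (y + 2) (by rw [show y + 2 + m = y + m + 2 by ring, h1, ← hy])
      · exfalso
        have hx : c (x + 2) = c (x + m) := (key x).resolve_left h1
        have hy : y = x + m := by linear_combination -hxy
        rw [hy] at h2
        exact hex (x + 2) (by rw [show x + 2 + m = x + m + 2 by ring, h2, ← hx])
      · exact add_right_cancel (add_right_cancel hxy)
    obtain ⟨φ, hφ⟩ := mkaut f 2 hf hinj
    have h0 := hd φ (fun v => by rw [hφ]; exact hcpres v) 0
    rw [hφ, hfdef] at h0
    dsimp only at h0
    split_ifs at h0 with h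
    · rw [zero_add] at h0
      exact h2nz h0
    · rw [zero_add] at h0
      exact h2m h0
end

section
/- Suppose n ≥ 7, 1 < k < n/2, k ≠ n/2 − 1, k ≠ 3, and (n,k) ≠ (10,3). Then in C_n(1, k), no 4-cycle contains two incident edges both lying in E₁ (the set of edges joining vertices whose indices differ by ±1 mod n); equivalently, for any i, the vertices v_{i} and v_{i+2} have no common neighbor other than v_{i+1}. -/
open SimpleGraph

/-- Suppose `n ≥ 7`, `1 < k < n/2`, `k ≠ n/2 − 1`, `k ≠ 3`, and `(n,k) ≠ (10,3)`.
Then in `C_n(1, k)` the vertices `v_i` and `v_{i+2}` have no common neighbor other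
than `v_{i+1}`: no 4-cycle contains two incident edges of `E₁`. -/
theorem stmt_10 (n k : ℕ) (hn : 7 ≤ n) (hk1 : 1 < k) (hk2 : 2 * k < n)
    (hk3 : 2 * (k + 1) ≠ n) (hk4 : k ≠ 3) (hk5 : (n, k) ≠ (10, 3)) :
    ∀ i w : ZMod n,
      (circulantGraph ({1, (k : ZMod n)} : Set (ZMod n))).Adj i w →
      (circulantGraph ({1, (k : ZMod n)} : Set (ZMod n))).Adj (i + 2) w →
      w = i + 1 := by
  haveI : NeZero n := ⟨by omega⟩
  have keyEq : ∀ a b : ℕ, a < n → b < n → (a : ZMod n) = (b : ZMod n) → a = b := by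
    intro a b ha hb h
    have := congrArg ZMod.val h
    rwa [ZMod.val_natCast_of_lt ha, ZMod.val_natCast_of_lt hb] at this
  have keyDvd : ∀ a : ℕ, (a : ZMod n) = 0 → n ∣ a := by
    intro a h
    rwa [ZMod.natCast_eq_zero_iff] at h
  intro i w h1 h2
  simp only [circulantGraph, fromRel_adj, Set.mem_insert_iff, Set.mem_singleton_iff] at h1 h2
  rcases h1 with ⟨-, (h1 | h1) | (h1 | h1)⟩ <;>
    rcases h2 with ⟨-, (h2 | h2) | (h2 | h2)⟩
  · have h := keyEq 2 0 (by omega) (by omega) (by push_cast; linear_combination h2 - h1); omega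
  · have h := keyEq k 3 (by omega) (by omega) (by push_cast; linear_combination h1 - h2); omega
  · have h := keyEq 4 0 (by omega) (by omega) (by push_cast; linear_combination - h1 - h2); omega
  · have h := keyEq (k + 3) 0 (by omega) (by omega) (by push_cast; linear_combination - h1 - h2)
    omega
  · have h := keyEq (k + 1) 0 (by omega) (by omega) (by push_cast; linear_combination h2 - h1)
    omega
  · have h := keyEq 2 0 (by omega) (by omega) (by push_cast; linear_combination h2 - h1); omega
  · have h := keyEq (k + 3) 0 (by omega) (by omega) (by push_cast; linear_combination - h1 - h2)
    omega
  · obtain ⟨c, hc⟩ := keyDvd (2 * k + 2) (by push_cast; linear_combination - h1 - h2)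
    rcases c with _ | _ | c
    · omega
    · omega
    · have h : n * (c + 1 + 1) = n * c + 2 * n := by ring
      omega
  · linear_combination h1
  · linear_combination h1
  · linear_combination h1
  · linear_combination h1
  · have h := keyEq k 1 (by omega) (by omega) (by push_cast; linear_combination - h1 - h2); omega
  · have h := keyEq (2 * k) 2 (by omega) (by omega) (by push_cast; linear_combination - h1 - h2)
    omega
  · have h := keyEq k 3 (by omega) (by omega) (by push_cast; linear_combination h2 - h1); omega
  · have h := keyEq 2 0 (by omega) (by omega) (by push_cast; linear_combination h1 - h2); omega
end

section
/- Let n, k satisfy 1 < k < n/2 and k² ≡ 1 (mod n) or k² ≡ −1 (mod n). Then for any edge {v_s, v_t} of C_n(1, k), the map φ_{st} sending v_i to v_{s + (t−s)·i} (indices mod n) is a graph automorphism of C_n(1, k) sending v_0 to v_s and v_1 to v_t. -/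
open SimpleGraph

/-- If `1 < k < n/2` and `k² ≡ ±1 (mod n)`, then for any edge `{v_s, v_t}` of `C_n(1,k)`,
the map `v_i ↦ v_{s + (t−s)·i}` is a graph automorphism sending `v_0` to `v_s` and
`v_1` to `v_t`. -/
theorem stmt_12 (n k : ℕ) (hk1 : 1 < k) (hk2 : 2 * k < n)
    (hsq : ((k : ZMod n)) ^ 2 = 1 ∨ ((k : ZMod n)) ^ 2 = -1)
    (s t : ZMod n)
    (hadj : (circulantGraph ({1, (k : ZMod n)} : Set (ZMod n))).Adj s t) :
    ∃ φ : circulantGraph ({1, (k : ZMod n)} : Set (ZMod n)) ≃g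
        circulantGraph ({1, (k : ZMod n)} : Set (ZMod n)),
      (∀ i : ZMod n, φ i = s + (t - s) * i) ∧ φ 0 = s ∧ φ 1 = t := by
  classical
  have hkk : (k : ZMod n) * (k : ZMod n) = 1 ∨ (k : ZMod n) * (k : ZMod n) = -1 := by
    rcases hsq with h | h <;> [left; right] <;> rw [← pow_two] <;> exact h
  have hadj' := hadj
  rw [circulantGraph_adj] at hadj'
  obtain ⟨hne, hmem⟩ := hadj'
  have hdT : t - s = 1 ∨ t - s = (k : ZMod n) ∨ t - s = -1 ∨ t - s = -(k : ZMod n) := by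
    rcases hmem with h | h <;> simp only [Set.mem_insert_iff, Set.mem_singleton_iff] at h
    · rcases h with h | h
      · right; right; left; linear_combination -h
      · right; right; right; linear_combination -h
    · rcases h with h | h
      · left; exact h
      · right; left; exact h
  have closure : ∀ a x : ZMod n,
      (a = 1 ∨ a = (k : ZMod n) ∨ a = -1 ∨ a = -(k : ZMod n)) →
      (x = 1 ∨ x = (k : ZMod n) ∨ x = -1 ∨ x = -(k : ZMod n)) →
      (a * x = 1 ∨ a * x = (k : ZMod n) ∨ a * x = -1 ∨ a * x = -(k : ZMod n)) := by
    intro a x ha hx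
    rcases hkk with hK | hK <;>
      rcases ha with rfl | rfl | rfl | rfl <;> rcases hx with rfl | rfl | rfl | rfl <;>
      simp only [one_mul, mul_one, neg_mul, mul_neg, neg_neg, hK] <;>
      first
        | (left; trivial)
        | (right; left; trivial)
        | (right; right; left; trivial)
        | (right; right; right; trivial)
  -- find an inverse d' for d := t - s
  obtain ⟨d', hdd', hd'T⟩ : ∃ d' : ZMod n, (t - s) * d' = 1 ∧
      (d' = 1 ∨ d' = (k : ZMod n) ∨ d' = -1 ∨ d' = -(k : ZMod n)) := by
    rcases hdT with h | h | h | h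
    · exact ⟨1, by rw [h]; ring, Or.inl rfl⟩
    · rcases hkk with h2 | h2
      · exact ⟨(k : ZMod n), by rw [h]; exact h2, Or.inr (Or.inl rfl)⟩
      · exact ⟨-(k : ZMod n), by rw [h, mul_neg, h2, neg_neg],
          Or.inr (Or.inr (Or.inr rfl))⟩
    · exact ⟨-1, by rw [h]; ring, Or.inr (Or.inr (Or.inl rfl))⟩
    · rcases hkk with h2 | h2
      · exact ⟨-(k : ZMod n), by rw [h, neg_mul_neg, h2],
          Or.inr (Or.inr (Or.inr rfl))⟩
      · exact ⟨(k : ZMod n), by rw [h, neg_mul, h2, neg_neg], Or.inr (Or.inl rfl)⟩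
  have hd'd : d' * (t - s) = 1 := by rw [mul_comm]; exact hdd'
  let e : ZMod n ≃ ZMod n :=
    { toFun := fun i => s + (t - s) * i
      invFun := fun j => d' * (j - s)
      left_inv := fun i => by
        show d' * ((s + (t - s) * i) - s) = i
        rw [add_sub_cancel_left, ← mul_assoc, hd'd, one_mul]
      right_inv := fun j => by
        show s + (t - s) * (d' * (j - s)) = j
        rw [← mul_assoc, hdd', one_mul, add_sub_cancel] }
  have memT : ∀ u v : ZMod n,
      (u - v ∈ ({1, (k : ZMod n)} : Set (ZMod n)) ∨
       v - u ∈ ({1, (k : ZMod n)} : Set (ZMod n))) ↔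
      (v - u = 1 ∨ v - u = (k : ZMod n) ∨ v - u = -1 ∨ v - u = -(k : ZMod n)) := by
    intro u v
    simp only [Set.mem_insert_iff, Set.mem_singleton_iff]
    constructor
    · rintro ((h | h) | (h | h))
      · right; right; left; linear_combination -h
      · right; right; right; linear_combination -h
      · exact Or.inl h
      · exact Or.inr (Or.inl h)
    · rintro (h | h | h | h)
      · exact Or.inr (Or.inl h)
      · exact Or.inr (Or.inr h)
      · left; left; linear_combination -h
      · left; right; linear_combination -h
  have mapIff : ∀ u v : ZMod n,
      (circulantGraph ({1, (k : ZMod n)} : Set (ZMod n))).Adj (e u) (e v) ↔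
      (circulantGraph ({1, (k : ZMod n)} : Set (ZMod n))).Adj u v := by
    intro u v
    show (circulantGraph _).Adj (s + (t - s) * u) (s + (t - s) * v) ↔ (circulantGraph _).Adj u v
    rw [circulantGraph_adj, circulantGraph_adj, memT, memT]
    have hsub : (s + (t - s) * v) - (s + (t - s) * u) = (t - s) * (v - u) := by ring
    constructor
    · rintro ⟨h1, h2⟩
      refine ⟨fun h => h1 (by rw [h]), ?_⟩
      rw [hsub] at h2
      have := closure d' ((t - s) * (v - u)) hd'T h2
      rwa [← mul_assoc, hd'd, one_mul] at this
    · rintro ⟨h1, h2⟩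
      refine ⟨fun h => h1 (e.injective h), ?_⟩
      rw [hsub]
      exact closure (t - s) (v - u) hdT h2
  refine ⟨⟨e, mapIff _ _⟩, fun i => rfl, ?_, ?_⟩
  · show s + (t - s) * 0 = s
    rw [mul_zero, add_zero]
  · show s + (t - s) * 1 = t
    rw [mul_one, add_sub_cancel]
end

section
/- Every proper coloring of C_{10}(1, 3) using at most 4 colors admits a nontrivial color-preserving automorphism; hence the distinguishing chromatic number of C_{10}(1, 3) is at least 5. -/
open SimpleGraph

private lemma aux5 (g : Fin 5 → Fin 4 × Fin 4)
    (hc : ∀ i j, i ≠ j → (g i).1 ≠ (g j).2)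
    (hinj : Function.Injective g) (x : Fin 4)
    (hB : ∀ i, (g i).2 ≠ x)
    (hA : 3 ≤ (Finset.univ.filter (fun i => (g i).1 = x)).card) : False := by
  set A := Finset.univ.filter (fun i => (g i).1 = x) with hAdef
  have hinj2 : Set.InjOn (fun i => (g i).2) A := by
    intro i hi j hj hij
    apply hinj
    have hi1 : (g i).1 = x := (Finset.mem_filter.1 hi).2
    have hj1 : (g j).1 = x := (Finset.mem_filter.1 hj).2
    exact Prod.ext (hi1.trans hj1.symm) hij
  have himg : A.image (fun i => (g i).2) ⊆ Finset.univ.erase x := by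
    intro y hy
    obtain ⟨i, _, rfl⟩ := Finset.mem_image.1 hy
    exact Finset.mem_erase.2 ⟨hB i, Finset.mem_univ _⟩
  have hcardimg : (A.image (fun i => (g i).2)).card = A.card :=
    Finset.card_image_of_injOn hinj2
  have h3 : (Finset.univ.erase x).card = 3 := by
    rw [Finset.card_erase_of_mem (Finset.mem_univ _)]
    simp
  have hle : A.card ≤ 3 := by
    rw [← hcardimg]
    exact h3 ▸ Finset.card_le_card himg
  have hA3 : A.card = 3 := le_antisymm hle hA
  have himgeq : A.image (fun i => (g i).2) = Finset.univ.erase x :=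
    Finset.eq_of_subset_of_card_le himg (by rw [hcardimg, hA3, h3])
  have hexnot : ∃ i, i ∉ A := by
    by_contra hall
    push_neg at hall
    have : A = Finset.univ := Finset.eq_univ_iff_forall.2 hall
    rw [this] at hA3
    simp at hA3
  obtain ⟨i, hi⟩ := hexnot
  have hix : (g i).1 ≠ x := by
    intro h
    exact hi (Finset.mem_filter.2 ⟨Finset.mem_univ _, h⟩)
  have : (g i).1 ∈ Finset.univ.erase x := Finset.mem_erase.2 ⟨hix, Finset.mem_univ _⟩
  rw [← himgeq] at this
  obtain ⟨j, hjA, hj2⟩ := Finset.mem_image.1 this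
  have hne : i ≠ j := fun h => hi (h ▸ hjA)
  exact hc i j hne hj2.symm

private lemma key5 (g : Fin 5 → Fin 4 × Fin 4)
    (hc : ∀ i j, i ≠ j → (g i).1 ≠ (g j).2) :
    ∃ i j, i ≠ j ∧ g i = g j := by
  by_contra hcol
  push_neg at hcol
  have hinj : Function.Injective g := by
    intro i j hgij
    by_contra hne
    exact hcol i j hne hgij
  have hsum1 : ∑ x : Fin 4, (Finset.univ.filter (fun i => (g i).1 = x)).card = 5 := by
    have := Finset.card_eq_sum_card_fiberwise
      (f := fun i => (g i).1) (s := (Finset.univ : Finset (Fin 5)))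
      (t := (Finset.univ : Finset (Fin 4))) (fun i _ => Finset.mem_univ _)
    simpa using this.symm
  have hsum2 : ∑ x : Fin 4, (Finset.univ.filter (fun i => (g i).2 = x)).card = 5 := by
    have := Finset.card_eq_sum_card_fiberwise
      (f := fun i => (g i).2) (s := (Finset.univ : Finset (Fin 5)))
      (t := (Finset.univ : Finset (Fin 4))) (fun i _ => Finset.mem_univ _)
    simpa using this.symm
  have hex : ∃ x : Fin 4,
      3 ≤ (Finset.univ.filter (fun i => (g i).1 = x)).card +
          (Finset.univ.filter (fun i => (g i).2 = x)).card := by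
    by_contra hno
    push_neg at hno
    have hle : ∑ x : Fin 4, ((Finset.univ.filter (fun i => (g i).1 = x)).card +
        (Finset.univ.filter (fun i => (g i).2 = x)).card) ≤ ∑ _x : Fin 4, 2 :=
      Finset.sum_le_sum fun x _ => by have := hno x; omega
    rw [Finset.sum_add_distrib, hsum1, hsum2] at hle
    simp at hle
  obtain ⟨x, hx⟩ := hex
  by_cases hB : ∀ i, (g i).2 ≠ x
  · have hcB : (Finset.univ.filter (fun i => (g i).2 = x)).card = 0 := by
      rw [Finset.card_eq_zero, Finset.filter_eq_empty_iff]
      intro i _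
      exact hB i
    exact aux5 g hc hinj x hB (by omega)
  · push_neg at hB
    obtain ⟨b, hb⟩ := hB
    by_cases hA : ∀ i, (g i).1 ≠ x
    · have hcA : (Finset.univ.filter (fun i => (g i).1 = x)).card = 0 := by
        rw [Finset.card_eq_zero, Finset.filter_eq_empty_iff]
        intro i _
        exact hA i
      exact aux5 (fun i => ((g i).2, (g i).1))
        (fun i j hij => (hc j i hij.symm).symm)
        (fun i j h => hinj (Prod.ext (congrArg Prod.snd h) (congrArg Prod.fst h)))
        x hA (show 3 ≤ (Finset.univ.filter (fun i => (g i).2 = x)).card by omega)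
    · push_neg at hA
      obtain ⟨a, ha⟩ := hA
      have h1 : (Finset.univ.filter (fun i => (g i).1 = x)) ⊆ {b} := by
        intro i hi
        have hi1 : (g i).1 = x := (Finset.mem_filter.1 hi).2
        have : i = b := by
          by_contra hne
          exact hc i b hne (hi1.trans hb.symm)
        simp [this]
      have h2 : (Finset.univ.filter (fun i => (g i).2 = x)) ⊆ {a} := by
        intro i hi
        have hi2 : (g i).2 = x := (Finset.mem_filter.1 hi).2
        have : a = i := by
          by_contra hne
          exact hc a i hne (ha.trans hi2.symm)
        simp [this.symm]
      have c1 := Finset.card_le_card h1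
      have c2 := Finset.card_le_card h2
      simp only [Finset.card_singleton] at c1 c2
      omega

private def ev (i : Fin 5) : ZMod 10 := 2 * (i.val : ZMod 10)

private def dswap (u v x : ZMod 10) : ZMod 10 :=
  if x = u then v else if x = v then u else
  if x = u + 5 then v + 5 else if x = v + 5 then u + 5 else x

private lemma adj_iff (x y : ZMod 10) :
    (circulantGraph ({1, 3} : Set (ZMod 10))).Adj x y ↔
    (x - y = 1 ∨ x - y = 3 ∨ x - y = 7 ∨ x - y = 9) := by
  simp only [circulantGraph_adj, Set.mem_insert_iff, Set.mem_singleton_iff]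
  constructor
  · rintro ⟨h, (h1|h1)|(h1|h1)⟩
    · tauto
    · tauto
    · have : x - y = 9 := by rw [← neg_sub, h1]; decide
      tauto
    · have : x - y = 7 := by rw [← neg_sub, h1]; decide
      tauto
  · rintro (h1|h1|h1|h1) <;>
      refine ⟨fun he => by subst he; simp at h1; revert h1; decide, ?_⟩
    · tauto
    · tauto
    · right; right; rw [← neg_sub, h1]; decide
    · right; left; rw [← neg_sub, h1]; decide

private lemma dswap_invol : ∀ i j : Fin 5, ∀ x,
    dswap (ev i) (ev j) (dswap (ev i) (ev j) x) = x := by decide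

set_option maxRecDepth 4000 in
private lemma dswap_adj : ∀ i j : Fin 5, ∀ x y : ZMod 10,
    ((dswap (ev i) (ev j) x - dswap (ev i) (ev j) y = 1 ∨
      dswap (ev i) (ev j) x - dswap (ev i) (ev j) y = 3 ∨
      dswap (ev i) (ev j) x - dswap (ev i) (ev j) y = 7 ∨
      dswap (ev i) (ev j) x - dswap (ev i) (ev j) y = 9) ↔
     (x - y = 1 ∨ x - y = 3 ∨ x - y = 7 ∨ x - y = 9)) := by decide

private lemma ev_adj : ∀ i j : Fin 5, i ≠ j →
    (ev i - (ev j + 5) = 1 ∨ ev i - (ev j + 5) = 3 ∨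
     ev i - (ev j + 5) = 7 ∨ ev i - (ev j + 5) = 9) := by decide

private lemma ev_ne : ∀ i j : Fin 5, i ≠ j → ev i ≠ ev j := by decide

/-- Every proper coloring of `C_10(1, 3)` using at most 4 colors admits a nontrivial
color-preserving automorphism; hence `χ_D(C_10(1,3)) ≥ 5`. -/
theorem stmt_15 (c : ZMod 10 → Fin 4)
    (hp : ∀ x y, (circulantGraph ({1, 3} : Set (ZMod 10))).Adj x y → c x ≠ c y) :
    ∃ φ : circulantGraph ({1, 3} : Set (ZMod 10)) ≃g
        circulantGraph ({1, 3} : Set (ZMod 10)),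
      (∀ v, c (φ v) = c v) ∧ ∃ v, φ v ≠ v := by
  obtain ⟨i, j, hij, hgg⟩ := key5 (fun k => (c (ev k), c (ev k + 5)))
    (fun i j hne => hp (ev i) (ev j + 5) ((adj_iff _ _).2 (ev_adj i j hne)))
  have hu : c (ev i) = c (ev j) := congrArg Prod.fst hgg
  have hv : c (ev i + 5) = c (ev j + 5) := congrArg Prod.snd hgg
  refine ⟨⟨⟨dswap (ev i) (ev j), dswap (ev i) (ev j),
      fun x => dswap_invol i j x, fun x => dswap_invol i j x⟩, ?_⟩, ?_, ?_⟩
  · intro x y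
    rw [adj_iff, adj_iff]
    exact dswap_adj i j x y
  · intro x
    show c (dswap (ev i) (ev j) x) = c x
    unfold dswap
    split_ifs with h1 h2 h3 h4
    · rw [h1]; exact hu.symm
    · rw [h2]; exact hu
    · rw [h3]; exact hv.symm
    · rw [h4]; exact hv
    · rfl
  · refine ⟨ev i, ?_⟩
    show dswap (ev i) (ev j) (ev i) ≠ ev i
    unfold dswap
    simp only [if_pos rfl]
    exact (ev_ne i j hij).symm
end

section
/- In any distinguishing proper 3-coloring of C_n(1, 4) with n ≥ 8, there exists an index i such that the vertices v_i, v_{i+1}, …, v_{i+7} receive colors in the pattern C, A, B, C, B, C, A, B, where {A, B, C} is the set of the three colors used. -/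
open SimpleGraph

/-!
Read the colours as elements of `ZMod 3` and look at the steps `c (v + 1) - c v`, which are
nonzero. Adjacency along `4` says that no four consecutive steps sum to zero, i.e. no four
consecutive steps take each of the two nonzero values twice.

If `c (v + 2) ≠ c v` for every `v`, any three consecutive colours are distinct and the colouring
is `3`-periodic, so translation by `3` is a nontrivial colour-preserving automorphism. Hence some
`v` has `c (v + 2) = c v`, i.e. two opposite consecutive steps. The four windows through this
pair force the steps around it to be `u, u, u, -u, u, u, u`, and these are exactly the steps of
`C, A, B, C, B, C, A, B`.
-/

open Fin.CommRing

namespace Fin3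

theorem eq_of_add_ne_zero : ∀ a b : Fin 3, a ≠ 0 → b ≠ 0 → a + b ≠ 0 → a = b := by decide

theorem add_self_ne_zero : ∀ a : Fin 3, a ≠ 0 → a + a ≠ 0 := by decide

theorem eq_of_ne_of_ne : ∀ a b c x : Fin 3, a ≠ b → b ≠ c → a ≠ c → x ≠ b → x ≠ c → x = a := by
  omega

end Fin3

theorem ZMod.natCast_ne_zero_of_lt {n k : ℕ} (hk : 0 < k) (hkn : k < n) : (k : ZMod n) ≠ 0 :=
  fun h => absurd (Nat.le_of_dvd hk ((ZMod.natCast_eq_zero_iff k n).1 h)) (by omega)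

section Circulant

variable {G α : Type*} [AddCommGroup G] {s : Set G} {c : G → α}

theorem IsProperColoring.apply_add_ne (hc : IsProperColoring (circulantGraph s) c) {a : G}
    (ha : a ∈ s) (ha₀ : a ≠ 0) (v : G) : c (v + a) ≠ c v :=
  (hc v (v + a) (by simp [ha, ha₀])).symm

theorem IsDistinguishing.exists_apply_add_ne (hc : IsDistinguishing (circulantGraph s) c) {g : G}
    (hg : g ≠ 0) : ∃ v, c (v + g) ≠ c v := by
  by_contra! hinv
  let φ : circulantGraph s ≃g circulantGraph s :=
    ⟨Equiv.addRight g, circulantGraph_adj_translate⟩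
  have hφ : 0 + g = 0 := hc φ hinv 0
  exact hg (by simpa using hφ)

end Circulant

theorem exists_apply_add_two_eq {R : Type*} [Ring R] {c : R → Fin 3}
    (h₁ : ∀ v, c (v + 1) ≠ c v) (h₃ : ∃ v, c (v + 3) ≠ c v) : ∃ v, c (v + 2) = c v := by
  by_contra! h₂
  obtain ⟨v, hv⟩ := h₃
  have h₁₂ : c (v + 2) ≠ c (v + 1) := by simpa [add_assoc, one_add_one_eq_two] using h₁ (v + 1)
  have h₃₁ : c (v + 3) ≠ c (v + 1) := by
    simpa [add_assoc, ← two_add_one_eq_three, add_comm (2 : R)] using h₂ (v + 1)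
  have h₃₂ : c (v + 3) ≠ c (v + 2) := by simpa [add_assoc, two_add_one_eq_three] using h₁ (v + 2)
  exact hv (Fin3.eq_of_ne_of_ne _ _ _ _ (h₁ v).symm h₁₂.symm (h₂ v).symm h₃₁ h₃₂)

/-- The steps of the colour pattern `C, A, B, C, B, C, A, B`. -/
def IsIsolatedReversalAt (d : ℤ → Fin 3) (i : ℤ) : Prop :=
  d i ≠ 0 ∧ d (i + 1) = d i ∧ d (i + 2) = d i ∧ d (i + 3) = -d i ∧
    d (i + 4) = d i ∧ d (i + 5) = d i ∧ d (i + 6) = d i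

theorem exists_isIsolatedReversalAt {d : ℤ → Fin 3} (hd : ∀ k, d k ≠ 0)
    (hw : ∀ k, d k + d (k + 1) + d (k + 2) + d (k + 3) ≠ 0) (h01 : d 0 + d 1 = 0) :
    ∃ i, IsIsolatedReversalAt d i := by
  -- A window containing two opposite steps has its other two steps equal.
  have window : ∀ k p q r t, d k + d (k + 1) + d (k + 2) + d (k + 3) = d p + d q + (d r + d t) →
      d r + d t = 0 → d p = d q := fun k p q r t hsum hrt =>
    Fin3.eq_of_add_ne_zero _ _ (hd p) (hd q) (by simpa [hsum, hrt] using hw k)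
  have hm2 : d (-2) = d (-1) := window (-2) (-2) (-1) 0 1 (by norm_num; ring) h01
  have hm1 : d (-1) = d 2 := window (-1) (-1) 2 0 1 (by norm_num; ring) h01
  have h23 : d 2 = d 3 := window 0 2 3 0 1 (by norm_num; ring) h01
  by_cases h21 : d 2 + d 0 = 0
  · have hm3 : d (-3) = d (-2) := window (-3) (-3) (-2) (-1) 0 (by norm_num; ring)
      (by rw [hm1, h21])
    refine ⟨-3, ?_⟩
    norm_num [IsIsolatedReversalAt]
    grind
  · have h20 : d 2 = d 0 := Fin3.eq_of_add_ne_zero _ _ (hd 2) (hd 0) h21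
    have h34 : d 3 = d 4 := window 1 3 4 1 2 (by norm_num; ring) (by rw [h20, add_comm, h01])
    refine ⟨-2, ?_⟩
    norm_num [IsIsolatedReversalAt]
    grind

def HasPattern {R α : Type*} [AddMonoidWithOne R] (c : R → α) (i : R) : Prop :=
  ∃ A B C : α, A ≠ B ∧ B ≠ C ∧ A ≠ C ∧
    c i = C ∧ c (i + 1) = A ∧ c (i + 2) = B ∧ c (i + 3) = C ∧
    c (i + 4) = B ∧ c (i + 5) = C ∧ c (i + 6) = A ∧ c (i + 7) = B

theorem HasPattern.of_comp_add_intCast {R α : Type*} [Ring R] {c : R → α} {v : R} {i : ℤ}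
    (h : HasPattern (fun k : ℤ => c (v + k)) i) : HasPattern c (v + i) := by
  simpa only [HasPattern, Int.cast_add, Int.cast_one, Int.cast_ofNat, add_assoc] using h

theorem HasPattern.of_isIsolatedReversalAt {c : ℤ → Fin 3} {i : ℤ}
    (h : IsIsolatedReversalAt (fun k => c (k + 1) - c k) i) : HasPattern c i := by
  obtain ⟨hu, h1, h2, h3, h4, h5, h6⟩ := h
  norm_num [add_assoc] at h1 h2 h3 h4 h5 h6
  set u := c (i + 1) - c i with hu_def
  have three : (3 : Fin 3) = 0 := rfl
  refine ⟨c i + u, c i - u, c i, ?_, ?_, ?_, rfl, ?_, ?_, ?_, ?_, ?_, ?_, ?_⟩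
  · exact fun h => Fin3.add_self_ne_zero u hu (by linear_combination h)
  · exact fun h => hu (by linear_combination -h)
  · exact fun h => hu (by linear_combination h)
  · linear_combination -hu_def
  · linear_combination h1 - hu_def + u * three
  · linear_combination h1 + h2 - hu_def + u * three
  · linear_combination h1 + h2 + h3 + u * three
  · linear_combination h1 + h2 + h3 + h4 + u * three
  · linear_combination h1 + h2 + h3 + h4 + h5 + u * three
  · linear_combination h1 + h2 + h3 + h4 + h5 + h6 + 2 * u * three

theorem exists_hasPattern_of_apply_two_eq {c : ℤ → Fin 3} (h₁ : ∀ k, c (k + 1) ≠ c k)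
    (h₄ : ∀ k, c (k + 4) ≠ c k) (h₂ : c 2 = c 0) : ∃ i, HasPattern c i := by
  obtain ⟨i, hi⟩ := exists_isIsolatedReversalAt (d := fun k => c (k + 1) - c k)
    (fun k => sub_ne_zero.2 (h₁ k))
    (fun k h => h₄ k (by norm_num [add_assoc] at h; linear_combination h))
    (by norm_num [h₂])
  exact ⟨i, .of_isIsolatedReversalAt hi⟩

/-- In any distinguishing proper 3-coloring of `C_n(1, 4)` with `n ≥ 8`, eight
consecutively-indexed vertices receive colors in the pattern `C,A,B,C,B,C,A,B`,
where `A, B, C` are the three distinct colors. -/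
theorem stmt_19 (n : ℕ) (hn : 8 ≤ n) (c : ZMod n → Fin 3)
    (hp : IsProperColoring (circulantGraph ({1, 4} : Set (ZMod n))) c)
    (hd : IsDistinguishing (circulantGraph ({1, 4} : Set (ZMod n))) c) :
    ∃ i : ZMod n, ∃ A B C : Fin 3, A ≠ B ∧ B ≠ C ∧ A ≠ C ∧
      c i = C ∧ c (i + 1) = A ∧ c (i + 2) = B ∧ c (i + 3) = C ∧
      c (i + 4) = B ∧ c (i + 5) = C ∧ c (i + 6) = A ∧ c (i + 7) = B := by
  have h₁ : ∀ v, c (v + 1) ≠ c v := hp.apply_add_ne (by simp)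
    (by exact_mod_cast ZMod.natCast_ne_zero_of_lt one_pos (by omega))
  have h₄ : ∀ v, c (v + 4) ≠ c v := hp.apply_add_ne (by simp)
    (by exact_mod_cast ZMod.natCast_ne_zero_of_lt (k := 4) (by norm_num) (by omega))
  obtain ⟨v, hv⟩ := exists_apply_add_two_eq h₁ <| hd.exists_apply_add_ne <|
    by exact_mod_cast ZMod.natCast_ne_zero_of_lt (k := 3) (by norm_num) (by omega)
  obtain ⟨i, hi⟩ := exists_hasPattern_of_apply_two_eq (c := fun k : ℤ => c (v + k))
    (fun k => by simpa [add_assoc] using h₁ (v + k))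
    (fun k => by simpa [add_assoc] using h₄ (v + k))
    (by simpa using hv)
  exact ⟨v + i, hi.of_comp_add_intCast⟩
end
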